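/- arXiv:1505.00461 — 9 statements merged into one kernel-verified Lean document; each statement's English description precedes it below -/
import Mathlib

section
/- Let Z ∈ M_d(ℂ) be a non-normal matrix, i.e. Z Z† ≠ Z† Z. Define the matrix Q(Z) indexed by Fin d × Fin 2 as the block matrix Q(Z) = I ⊗ E₁₁ + Z ⊗ E₁₂ + Z† ⊗ E₂₁ + (Z†Z) ⊗ E₂₂, i.e. with block form [[I, Z],[Z†, Z†Z]] with respect to the second (two-dimensional) factor. Then Q(Z) is positive semidefinite but NOT separable with respect to the bipartition ℂ^d ⊗ ℂ². -/
open Matrix Kronecker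
open scoped ComplexOrder

/-- A bipartite matrix on `ℂ^{d₁} ⊗ ℂ^{d₂}` is separable if it is a finite sum of
Kronecker products of positive semidefinite matrices. -/
def MatSep {d₁ d₂ : ℕ} (ρ : Matrix (Fin d₁ × Fin d₂) (Fin d₁ × Fin d₂) ℂ) : Prop :=
  ∃ (k : ℕ) (A : Fin k → Matrix (Fin d₁) (Fin d₁) ℂ) (B : Fin k → Matrix (Fin d₂) (Fin d₂) ℂ),
    (∀ i, (A i).PosSemidef) ∧ (∀ i, (B i).PosSemidef) ∧ ρ = ∑ i, A i ⊗ₖ B i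

/-- The block matrix `Q(Z) = [[I, Z], [Z†, Z†Z]]` on `ℂ^d ⊗ ℂ²`. -/
noncomputable def Qmat {d : ℕ} (Z : Matrix (Fin d) (Fin d) ℂ) :
    Matrix (Fin d × Fin 2) (Fin d × Fin 2) ℂ :=
  (1 : Matrix (Fin d) (Fin d) ℂ) ⊗ₖ Matrix.single (0 : Fin 2) (0 : Fin 2) (1 : ℂ)
    + Z ⊗ₖ Matrix.single (0 : Fin 2) (1 : Fin 2) (1 : ℂ)
    + Zᴴ ⊗ₖ Matrix.single (1 : Fin 2) (0 : Fin 2) (1 : ℂ)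
    + (Zᴴ * Z) ⊗ₖ Matrix.single (1 : Fin 2) (1 : Fin 2) (1 : ℂ)

/-!
Peres' criterion: a separable matrix has a positive semidefinite partial transpose. Partially
transposing `Q(Z) = [[I, Z], [Z†, Z†Z]]` swaps its off-diagonal blocks, giving
`[[I, Z†], [Z, Z†Z]]`, whose Schur complement `Z†Z - ZZ†` has trace zero; so it is positive
semidefinite only if it vanishes, i.e. only if `Z` is normal. The Schur complement of `Q(Z)`
itself is `Z†Z - Z†Z = 0`, whence `Q(Z) ≥ 0`.
-/

namespace Matrix

variable {m n α 𝕜 : Type*} [RCLike 𝕜]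

def partialTranspose (ρ : Matrix (m × n) (m × n) α) : Matrix (m × n) (m × n) α :=
  fun p q => ρ (p.1, q.2) (q.1, p.2)

@[simp]
lemma partialTranspose_kronecker [Mul α] (A : Matrix m m α) (B : Matrix n n α) :
    (A ⊗ₖ B).partialTranspose = A ⊗ₖ Bᵀ := rfl

lemma partialTranspose_sum [AddCommMonoid α] {ι : Type*} (s : Finset ι)
    (ρ : ι → Matrix (m × n) (m × n) α) :
    (∑ i ∈ s, ρ i).partialTranspose = ∑ i ∈ s, (ρ i).partialTranspose := by
  ext p q
  simp [partialTranspose, Matrix.sum_apply]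

noncomputable def blockKron [NonAssocSemiring α] (A B C D : Matrix m m α) :
    Matrix (m × Fin 2) (m × Fin 2) α :=
  A ⊗ₖ single 0 0 1 + B ⊗ₖ single 0 1 1 + C ⊗ₖ single 1 0 1 + D ⊗ₖ single 1 1 1

def sumEquivProdFinTwo (m : Type*) : m ⊕ m ≃ m × Fin 2 where
  toFun := Sum.elim (·, 0) (·, 1)
  invFun p := if p.2 = 0 then .inl p.1 else .inr p.1
  left_inv := by rintro (i | i) <;> simp
  right_inv := by rintro ⟨i, a⟩; fin_cases a <;> simp

lemma blockKron_submatrix_sumEquivProdFinTwo [NonAssocSemiring α] (A B C D : Matrix m m α) :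
    (blockKron A B C D).submatrix (sumEquivProdFinTwo m) (sumEquivProdFinTwo m)
      = fromBlocks A B C D := by
  ext (i | i) (j | j) <;> simp [blockKron, sumEquivProdFinTwo]

lemma partialTranspose_blockKron [NonAssocSemiring α] (A B C D : Matrix m m α) :
    (blockKron A B C D).partialTranspose = blockKron A C B D := by
  ext ⟨i, a⟩ ⟨j, b⟩
  fin_cases a <;> fin_cases b <;> simp [blockKron, partialTranspose]

lemma posSemidef_blockKron_iff [Fintype m] (A B C D : Matrix m m 𝕜) :
    (blockKron A B C D).PosSemidef ↔ (fromBlocks A B C D).PosSemidef := by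
  rw [← blockKron_submatrix_sumEquivProdFinTwo, posSemidef_submatrix_equiv]

lemma posSemidef_blockKron_one_iff [Fintype m] [DecidableEq m] (B D : Matrix m m 𝕜) :
    (blockKron 1 B Bᴴ D).PosSemidef ↔ (D - Bᴴ * B).PosSemidef := by
  let _ : Invertible (1 : Matrix m m 𝕜) := invertibleOne
  rw [posSemidef_blockKron_iff, PosDef.fromBlocks₁₁ B D PosDef.one, inv_one, Matrix.mul_one]

end Matrix

theorem MatSep.posSemidef_partialTranspose {d₁ d₂ : ℕ}
    {ρ : Matrix (Fin d₁ × Fin d₂) (Fin d₁ × Fin d₂) ℂ} (hρ : MatSep ρ) :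
    ρ.partialTranspose.PosSemidef := by
  obtain ⟨k, A, B, hA, hB, rfl⟩ := hρ
  rw [partialTranspose_sum]
  exact posSemidef_sum _ fun i _ => by simpa using (hA i).kronecker (hB i).transpose

/-- For a non-normal matrix , the matrix  is positive semidefinite but entangled. -/
theorem stmt_2 (d : ℕ) (Z : Matrix (Fin d) (Fin d) ℂ) (hZ : Z * Zᴴ ≠ Zᴴ * Z) :
    (Qmat Z).PosSemidef ∧ ¬ MatSep (Qmat Z) := by
  have hQ : Qmat Z = blockKron 1 Z Zᴴ (Zᴴ * Z) := rfl
  refine ⟨by simp [hQ, posSemidef_blockKron_one_iff, PosSemidef.zero], fun hsep => hZ ?_⟩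
  have hPT : (blockKron 1 Zᴴ Zᴴᴴ (Zᴴ * Z)).PosSemidef := by
    simpa [hQ, partialTranspose_blockKron] using hsep.posSemidef_partialTranspose
  have hcomm : (Zᴴ * Z - Z * Zᴴ).PosSemidef := by
    simpa using (posSemidef_blockKron_one_iff _ _).mp hPT
  have htrace : (Zᴴ * Z - Z * Zᴴ).trace = 0 := by rw [trace_sub, trace_mul_comm, sub_self]
  exact (sub_eq_zero.mp (hcomm.trace_eq_zero_iff.mp htrace)).symm
end

section
/- Let φ : M_d(ℂ) → M_d(ℂ) be a ℂ-linear map in Holevo form. Let A ∈ M_d(ℂ) be positive semidefinite with rank r < d, and set s = rank φ(A). If r² + s² < 2dr, then the kernel of φ (as a ℂ-linear endomorphism of M_d(ℂ)) has complex dimension at least 2dr − r² − s² > 0. -/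
open Matrix Kronecker
open scoped ComplexOrder

/-- Holevo form: `φ(X) = Σ_k Tr(E_k X) ρ_k` with all `ρ_k`, `E_k` positive semidefinite.
(Equivalently, φ is entanglement-breaking.) -/
def HolevoForm {d : ℕ} (φ : Matrix (Fin d) (Fin d) ℂ →ₗ[ℂ] Matrix (Fin d) (Fin d) ℂ) : Prop :=
  ∃ (k : ℕ) (ρ E : Fin k → Matrix (Fin d) (Fin d) ℂ),
    (∀ i, (ρ i).PosSemidef) ∧ (∀ i, (E i).PosSemidef) ∧
      ∀ X, φ X = ∑ i, (E i * X).trace • ρ i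

/-!
Let `V` be the space of matrices `X` with `X (ker A) ⊆ range A`, of codimension at most `(d - r)²`.
Write `φ X = ∑ₖ Tr(Eₖ X) ρₖ` and let `P` be the support projection of `φ A = ∑ₖ Tr(Eₖ A) ρₖ`.
If `Tr(Eₖ A) ≠ 0`, then `0 ≤ Tr(Eₖ A) ρₖ ≤ φ A`, so `ρₖ = P ρₖ P`. If `Tr(Eₖ A) = 0`, positivity
forces `Eₖ A = A Eₖ = 0`; then `Eₖ X Eₖ = 0` for `X ∈ V`, so `Eₖ X` is nilpotent and
`Tr(Eₖ X) = 0`. Hence `φ` maps `V` into the corner `P M_d P`, of dimension `s²`, and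
`dim ker φ ≥ dim V - s² ≥ d² - (d - r)² - s²`.
-/

open Module LinearMap Submodule

section LinearAlgebra

variable {K M N : Type*} [Field K] [AddCommGroup M] [Module K M] [FiniteDimensional K M]
  [AddCommGroup N] [Module K N] [FiniteDimensional K N]

theorem Submodule.finrank_le_finrank_add_finrank_ker_of_map_le {f : M →ₗ[K] N}
    {V : Submodule K M} {W : Submodule K N} (h : V.map f ≤ W) :
    finrank K V ≤ finrank K W + finrank K (ker f) := by
  have hrange : finrank K (range (f.domRestrict V)) ≤ finrank K W := by
    rw [range_domRestrict]
    exact finrank_mono h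
  have hker : finrank K (ker (f.domRestrict V)) ≤ finrank K (ker f) := by
    rw [ker_domRestrict, (equivMapOfInjective _ V.injective_subtype _).finrank_eq]
    exact finrank_mono (map_comap_le _ _)
  have := (f.domRestrict V).finrank_range_add_finrank_ker
  omega

theorem Submodule.finrank_mul_finrank_le_finrank_compatibleMaps_add (p : Submodule K M)
    (q : Submodule K N) :
    finrank K M * finrank K N ≤
      finrank K (compatibleMaps p q) + finrank K p * finrank K (N ⧸ q) := by
  let restrict : (M →ₗ[K] N) →ₗ[K] p →ₗ[K] N ⧸ q :=
    llcomp K p N (N ⧸ q) q.mkQ ∘ₗ lcomp K N p.subtype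
  have hker : ker restrict = compatibleMaps p q := by
    ext f
    simp [restrict, compatibleMaps, SetLike.le_def, LinearMap.ext_iff]
  have := restrict.finrank_range_add_finrank_ker
  rw [hker] at this
  have := finrank_le (range restrict)
  rw [finrank_linearMap] at *
  omega

theorem Submodule.finrank_compatibleMaps_bot_inf_compatibleMaps_top_le (p : Submodule K M)
    (q : Submodule K N) :
    finrank K ↥(compatibleMaps p ⊥ ⊓ compatibleMaps ⊤ q : Submodule K (M →ₗ[K] N)) ≤
      finrank K (M ⧸ p) * finrank K q := by
  let extend : (M ⧸ p →ₗ[K] q) →ₗ[K] M →ₗ[K] N :=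
    lcomp K N p.mkQ ∘ₗ llcomp K (M ⧸ p) q N q.subtype
  have hle : compatibleMaps p ⊥ ⊓ compatibleMaps ⊤ q ≤ range extend := by
    rintro f ⟨hp, hq⟩
    refine ⟨p.liftQ (f.codRestrict q fun x => hq trivial) ?_, ?_⟩
    · rwa [ker_codRestrict]
    · ext x
      rfl
  calc _ ≤ finrank K (range extend) := finrank_mono hle
    _ ≤ _ := by rw [← finrank_linearMap]; exact finrank_range_le _

end LinearAlgebra

theorem LinearMap.comp_comp_eq_zero_of_mem_compatibleMaps {R M : Type*} [CommRing R]
    [AddCommGroup M] [Module R M] {f g x : Module.End R M} (hfg : f ∘ₗ g = 0) (hgf : g ∘ₗ f = 0)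
    (hx : x ∈ compatibleMaps (ker g) (range g)) : f ∘ₗ x ∘ₗ f = 0 := by
  ext v
  obtain ⟨w, hw⟩ : x (f v) ∈ range g := hx (by simp [← comp_apply, hgf])
  simp [← hw, ← comp_apply, hfg]

namespace Matrix

section CommRing

variable {R n : Type*} [CommRing R] [Fintype n]

theorem trace_conjTranspose_mul_self_mul_conjTranspose_mul_self [StarRing R]
    (B C : Matrix n n R) : (Bᴴ * B * (Cᴴ * C)).trace = ((C * Bᴴ)ᴴ * (C * Bᴴ)).trace := by
  rw [conjTranspose_mul, conjTranspose_conjTranspose, Matrix.mul_assoc, trace_mul_comm]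
  simp only [Matrix.mul_assoc]

theorem trace_mul_eq_zero_of_mul_mul_eq_zero [IsReduced R] [DecidableEq n] {E X : Matrix n n R}
    (h : E * X * E = 0) : (E * X).trace = 0 := by
  have hnil : IsNilpotent (E * X) := ⟨2, by rw [pow_two, ← Matrix.mul_assoc, h, Matrix.zero_mul]⟩
  exact (isNilpotent_trace_of_isNilpotent hnil).eq_zero

end CommRing

variable {𝕜 n : Type*} [RCLike 𝕜] [Fintype n]

namespace PosSemidef

open scoped MatrixOrder

variable {E A : Matrix n n 𝕜}

theorem trace_mul_nonneg (hE : E.PosSemidef) (hA : A.PosSemidef) : 0 ≤ (E * A).trace := by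
  classical
  obtain ⟨B, rfl⟩ := CStarAlgebra.nonneg_iff_eq_star_mul_self.mp hE.nonneg
  obtain ⟨C, rfl⟩ := CStarAlgebra.nonneg_iff_eq_star_mul_self.mp hA.nonneg
  rw [star_eq_conjTranspose, star_eq_conjTranspose,
    trace_conjTranspose_mul_self_mul_conjTranspose_mul_self]
  exact (posSemidef_conjTranspose_mul_self _).trace_nonneg

theorem mul_eq_zero_of_trace_mul_eq_zero (hE : E.PosSemidef) (hA : A.PosSemidef)
    (h : (E * A).trace = 0) : E * A = 0 := by
  classical
  obtain ⟨B, rfl⟩ := CStarAlgebra.nonneg_iff_eq_star_mul_self.mp hE.nonneg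
  obtain ⟨C, rfl⟩ := CStarAlgebra.nonneg_iff_eq_star_mul_self.mp hA.nonneg
  rw [star_eq_conjTranspose, star_eq_conjTranspose,
    trace_conjTranspose_mul_self_mul_conjTranspose_mul_self,
    trace_conjTranspose_mul_self_eq_zero_iff] at h
  have hBC : B * Cᴴ = 0 := by simpa using congrArg (·ᴴ) h
  rw [star_eq_conjTranspose, star_eq_conjTranspose, Matrix.mul_assoc, ← Matrix.mul_assoc B,
    hBC, Matrix.zero_mul, Matrix.mul_zero]

theorem mulVec_eq_zero_of_sum_mulVec_eq_zero {ι : Type*} [Fintype ι] {M : ι → Matrix n n 𝕜}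
    (hM : ∀ i, (M i).PosSemidef) {v : n → 𝕜} (hv : (∑ i, M i) *ᵥ v = 0) (i : ι) :
    M i *ᵥ v = 0 := by
  rw [← (hM i).dotProduct_mulVec_zero_iff]
  have hsum : ∑ j, star v ⬝ᵥ (M j *ᵥ v) = 0 := by
    simpa [sum_mulVec, dotProduct_sum] using congrArg (star v ⬝ᵥ ·) hv
  exact (Finset.sum_eq_zero_iff_of_nonneg fun j _ => (hM j).dotProduct_mulVec_nonneg v).mp
    hsum i (Finset.mem_univ i)

end PosSemidef

variable [DecidableEq n]

def kerToRange (A : Matrix n n 𝕜) : Submodule 𝕜 (Matrix n n 𝕜) :=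
  (compatibleMaps (ker (toEuclideanLin A)) (range (toEuclideanLin A))).comap
    toEuclideanLin.toLinearMap

/-- The corner `P M P`, where `P` is the orthogonal projection onto the support `(ker B)ᗮ`. -/
noncomputable def supportCorner (B : Matrix n n 𝕜) : Submodule 𝕜 (Matrix n n 𝕜) :=
  (compatibleMaps (ker (toEuclideanLin B)) ⊥ ⊓ compatibleMaps ⊤ (ker (toEuclideanLin B))ᗮ).comap
    toEuclideanLin.toLinearMap

theorem finrank_range_toEuclideanLin (A : Matrix n n 𝕜) :
    finrank 𝕜 (range (toEuclideanLin A)) = A.rank :=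
  (A.rank_eq_finrank_range_toLin (PiLp.basisFun 2 𝕜 n) (PiLp.basisFun 2 𝕜 n)).symm

theorem finrank_ker_toEuclideanLin (A : Matrix n n 𝕜) :
    finrank 𝕜 (ker (toEuclideanLin A)) = Fintype.card n - A.rank := by
  have := (toEuclideanLin A).finrank_range_add_finrank_ker
  rw [finrank_range_toEuclideanLin, finrank_euclideanSpace] at this
  omega

theorem finrank_comap_toEuclideanLin (V : Submodule 𝕜 (Module.End 𝕜 (EuclideanSpace 𝕜 n))) :
    finrank 𝕜 (V.comap (toEuclideanLin (m := n) (n := n)).toLinearMap) = finrank 𝕜 V := by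
  rw [comap_equiv_eq_map_symm, LinearEquiv.finrank_map_eq]

theorem card_mul_card_le_finrank_kerToRange_add (A : Matrix n n 𝕜) :
    Fintype.card n * Fintype.card n ≤
      finrank 𝕜 (kerToRange A) + (Fintype.card n - A.rank) * (Fintype.card n - A.rank) := by
  have hquot : finrank 𝕜 (EuclideanSpace 𝕜 n ⧸ range (toEuclideanLin A)) =
      Fintype.card n - A.rank := by
    have := (range (toEuclideanLin A)).finrank_quotient_add_finrank
    rw [finrank_range_toEuclideanLin, finrank_euclideanSpace] at this
    omega
  have := finrank_mul_finrank_le_finrank_compatibleMaps_add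
    (ker (toEuclideanLin A)) (range (toEuclideanLin A))
  rw [hquot, finrank_ker_toEuclideanLin, finrank_euclideanSpace] at this
  rwa [kerToRange, finrank_comap_toEuclideanLin]

theorem finrank_supportCorner_le (B : Matrix n n 𝕜) :
    finrank 𝕜 (supportCorner B) ≤ B.rank * B.rank := by
  have hker := finrank_ker_toEuclideanLin B
  have hle := B.rank_le_card_width
  have hquot : finrank 𝕜 (EuclideanSpace 𝕜 n ⧸ ker (toEuclideanLin B)) = B.rank := by
    have := (ker (toEuclideanLin B)).finrank_quotient_add_finrank
    rw [finrank_euclideanSpace] at this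
    omega
  have horth : finrank 𝕜 (ker (toEuclideanLin B))ᗮ = B.rank := by
    have := (ker (toEuclideanLin B)).finrank_add_finrank_orthogonal
    rw [finrank_euclideanSpace] at this
    omega
  have := finrank_compatibleMaps_bot_inf_compatibleMaps_top_le
    (ker (toEuclideanLin B)) (ker (toEuclideanLin B))ᗮ
  rwa [hquot, horth, ← finrank_comap_toEuclideanLin, ← supportCorner] at this

theorem IsHermitian.mem_supportCorner {B Y : Matrix n n 𝕜} (hY : Y.IsHermitian)
    (h : ker (toEuclideanLin B) ≤ ker (toEuclideanLin Y)) : Y ∈ supportCorner B := by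
  refine ⟨h, fun _ _ => ?_⟩
  have hrange : range (toEuclideanLin Y) ≤ (ker (toEuclideanLin B))ᗮ := by
    rw [← (isSymmetric_toEuclideanLin_iff.mpr hY).orthogonal_range] at h
    exact (le_orthogonal_orthogonal _).trans (orthogonal_le h)
  exact hrange (mem_range_self _ _)

theorem trace_mul_eq_zero_of_mem_kerToRange {E A X : Matrix n n 𝕜} (hEA : E * A = 0)
    (hAE : A * E = 0) (hX : X ∈ kerToRange A) : (E * X).trace = 0 := by
  refine trace_mul_eq_zero_of_mul_mul_eq_zero (toEuclideanLin.injective ?_)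
  rw [map_zero, toLpLin_mul_same, toLpLin_mul_same]
  exact comp_comp_eq_zero_of_mem_compatibleMaps
    (by rw [← toLpLin_mul_same, hEA, map_zero]) (by rw [← toLpLin_mul_same, hAE, map_zero]) hX

end Matrix

theorem HolevoForm.map_kerToRange_le {d : ℕ}
    {φ : Matrix (Fin d) (Fin d) ℂ →ₗ[ℂ] Matrix (Fin d) (Fin d) ℂ} (hφ : HolevoForm φ)
    {A : Matrix (Fin d) (Fin d) ℂ} (hA : A.PosSemidef) :
    (kerToRange A).map φ ≤ supportCorner (φ A) := by
  obtain ⟨k, ρ, E, hρ, hE, hφX⟩ := hφ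
  have hc : ∀ i, 0 ≤ (E i * A).trace := fun i => (hE i).trace_mul_nonneg hA
  rintro _ ⟨X, hX, rfl⟩
  rw [hφX X]
  refine Submodule.sum_mem _ fun i _ => ?_
  by_cases hci : (E i * A).trace = 0
  · have hEA := (hE i).mul_eq_zero_of_trace_mul_eq_zero hA hci
    have hAE : A * E i = 0 := by
      simpa [(hE i).isHermitian.eq, hA.isHermitian.eq] using congrArg (·ᴴ) hEA
    rw [trace_mul_eq_zero_of_mem_kerToRange hEA hAE hX, zero_smul]
    exact zero_mem _
  · refine smul_mem _ _ ((hρ i).isHermitian.mem_supportCorner fun v hv => ?_)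
    have hsum : (∑ j, (E j * A).trace • ρ j) *ᵥ v.ofLp = 0 := by
      simpa [← hφX, toLpLin_apply] using hv
    have hi := PosSemidef.mulVec_eq_zero_of_sum_mulVec_eq_zero
      (fun j => (hρ j).smul (hc j)) hsum i
    rw [smul_mulVec, smul_eq_zero, or_iff_right hci] at hi
    simp [toLpLin_apply, hi]

theorem stmt_3_general (d : ℕ) (φ : Matrix (Fin d) (Fin d) ℂ →ₗ[ℂ] Matrix (Fin d) (Fin d) ℂ)
    (hφ : HolevoForm φ) (A : Matrix (Fin d) (Fin d) ℂ) (hA : A.PosSemidef)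
    (r s : ℕ) (hr : r = A.rank) (hs : s = (φ A).rank) :
    2 * d * r - r ^ 2 - s ^ 2 ≤ Module.finrank ℂ ↥(LinearMap.ker φ) := by
  have hV := card_mul_card_le_finrank_kerToRange_add A
  have hW := finrank_supportCorner_le (φ A)
  have hK := finrank_le_finrank_add_finrank_ker_of_map_le (hφ.map_kerToRange_le hA)
  have hrd : r ≤ d := hr ▸ A.rank_le_card_width.trans_eq (Fintype.card_fin d)
  rw [Fintype.card_fin, ← hr] at hV
  rw [← hs] at hW
  obtain ⟨e, rfl⟩ := Nat.exists_eq_add_of_le hrd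
  rw [Nat.add_sub_cancel_left] at hV
  have : 2 * (r + e) * r ≤ r ^ 2 + s ^ 2 + finrank ℂ (ker φ) := by nlinarith
  omega

/-- Image of semipositive matrices through entanglement-breaking (Holevo form) maps:
a lower bound on the dimension of the kernel. -/
theorem stmt_3 (d : ℕ) (φ : Matrix (Fin d) (Fin d) ℂ →ₗ[ℂ] Matrix (Fin d) (Fin d) ℂ)
    (hφ : HolevoForm φ) (A : Matrix (Fin d) (Fin d) ℂ) (hA : A.PosSemidef)
    (r s : ℕ) (hr : r = A.rank) (hs : s = (φ A).rank)
    (hrd : r < d) (hnum : r ^ 2 + s ^ 2 < 2 * d * r) :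
    2 * d * r - r ^ 2 - s ^ 2 ≤ Module.finrank ℂ ↥(LinearMap.ker φ) :=
  stmt_3_general d φ hφ A hA r s hr hs
end

section
/- Let d ≥ 2 and let φ : M_d(ℂ) → M_d(ℂ) be a ℂ-linear, trace-preserving map in Holevo form. Suppose φ has a semipositive fixed point: there exists A ∈ M_d(ℂ) with A positive semidefinite, A ≠ 0, det A = 0, and φ(A) = A. Then the kernel of φ has complex dimension at least 2(d−1); in particular the determinant of φ (as a ℂ-linear endomorphism of M_d(ℂ)) is zero. -/
/-!
Diagonalise the fixed point, `A = U D Uᴴ`, and conjugate `φ` by `U`: this preserves the Holevo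
form and the dimension of the kernel, so we may assume `A = D = diagonal δ` with `δ ≥ 0`. Let
`Z = {i | δ i = 0}`; it is nonempty since `det D = 0` and proper since `D ≠ 0`. Comparing
diagonal entries in `∑ₖ tr (Eₖ D) • ρₖ = D` shows that every `ρₖ` with `tr (Eₖ D) ≠ 0` vanishes
on the rows and columns indexed by `Z`, while every `Eₖ` with `tr (Eₖ D) = 0` is supported on
`Z × Z`. Hence `φ` maps the matrices vanishing on the block `Z × Z` (dimension `d² - z²`) into
the matrices supported on `Zᶜ × Zᶜ` (dimension `(d - z)²`), and rank-nullity gives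
`dim ker φ ≥ 2 z (d - z) ≥ 2 (d - 1)`.
-/

open Matrix Kronecker
open scoped ComplexOrder

open Module Finset

section FiniteDimensional

variable {K V W : Type*} [DivisionRing K] [AddCommGroup V] [Module K V] [AddCommGroup W]
  [Module K W]

theorem LinearMap.finrank_le_finrank_ker_add_of_le_comap [FiniteDimensional K V]
    [FiniteDimensional K W] (f : V →ₗ[K] W) {p : Submodule K V} {q : Submodule K W}
    (h : p ≤ q.comap f) : finrank K p ≤ finrank K (ker f) + finrank K q := by
  have hrange : finrank K (range (f.domRestrict p)) ≤ finrank K q :=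
    Submodule.finrank_mono (by rintro _ ⟨x, rfl⟩; exact h x.2)
  have hker : finrank K (ker (f.domRestrict p)) ≤ finrank K (ker f) := by
    rw [← Submodule.finrank_map_subtype_eq]
    exact Submodule.finrank_mono (by rintro _ ⟨x, hx, rfl⟩; exact hx)
  have := (f.domRestrict p).finrank_range_add_finrank_ker
  omega

end FiniteDimensional

theorem LinearEquiv.finrank_ker_conj {R V W : Type*} [CommRing R] [AddCommGroup V] [Module R V]
    [AddCommGroup W] [Module R W] (e : V ≃ₗ[R] W) (f : Module.End R V) :
    finrank R (LinearMap.ker (e.conj f)) = finrank R (LinearMap.ker f) := by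
  have : LinearMap.ker (e.conj f) = (LinearMap.ker f).map (e : V →ₗ[R] W) := by
    ext x
    simp [Submodule.mem_map_equiv]
  rw [this, e.finrank_map_eq]

namespace Matrix

section Semiring

variable (R : Type*) {n : Type*} [Semiring R]

def restrictBlock (Z : Finset n) : Matrix n n R →ₗ[R] Matrix Z Z R where
  toFun X := X.submatrix (↑) (↑)
  map_add' _ _ := rfl
  map_smul' _ _ := rfl

def vanishingOnBlock (Z : Finset n) : Submodule R (Matrix n n R) :=
  LinearMap.ker (restrictBlock R Z)

def supportedOnBlock (Z : Finset n) : Submodule R (Matrix n n R) where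
  carrier := {X | ∀ i j, i ∉ Z ∨ j ∉ Z → X i j = 0}
  add_mem' hX hY i j hij := by simp [hX i j hij, hY i j hij]
  zero_mem' _ _ _ := rfl
  smul_mem' c X hX i j hij := by simp [hX i j hij]

variable {R}

theorem mem_vanishingOnBlock {Z : Finset n} {X : Matrix n n R} :
    X ∈ vanishingOnBlock R Z ↔ ∀ i ∈ Z, ∀ j ∈ Z, X i j = 0 := by
  simp only [vanishingOnBlock, LinearMap.mem_ker, ← Matrix.ext_iff]
  exact ⟨fun h i hi j hj => h ⟨i, hi⟩ ⟨j, hj⟩, fun h i j => h i i.2 j j.2⟩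

theorem trace_mul_eq_zero_of_mem_supportedOnBlock_of_mem_vanishingOnBlock [Fintype n]
    {Z : Finset n} {E X : Matrix n n R} (hE : E ∈ supportedOnBlock R Z)
    (hX : X ∈ vanishingOnBlock R Z) : (E * X).trace = 0 := by
  rw [mem_vanishingOnBlock] at hX
  refine Finset.sum_eq_zero fun i _ => Finset.sum_eq_zero fun j _ => ?_
  by_cases hij : i ∈ Z ∧ j ∈ Z
  · simp [hX j hij.2 i hij.1]
  · simp [hE i j (not_and_or.mp hij)]

end Semiring

section Field

variable {K n : Type*} [Field K] [Fintype n]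

theorem finrank_supportedOnBlock_le (Z : Finset n) :
    finrank K (supportedOnBlock K Z) ≤ #Z * #Z := by
  have hinj : Function.Injective ((restrictBlock K Z).domRestrict (supportedOnBlock K Z)) := by
    rw [← LinearMap.ker_eq_bot, Submodule.eq_bot_iff]
    intro X hX
    ext i j
    by_cases hij : i ∈ Z ∧ j ∈ Z
    · exact congrFun (congrFun hX ⟨i, hij.1⟩) ⟨j, hij.2⟩
    · exact X.2 i j (not_and_or.mp hij)
  simpa [finrank_matrix] using LinearMap.finrank_le_finrank_of_injective hinj

theorem card_mul_card_le_finrank_vanishingOnBlock_add (Z : Finset n) :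
    Fintype.card n * Fintype.card n ≤ finrank K (vanishingOnBlock K Z) + #Z * #Z := by
  have hrange : finrank K (LinearMap.range (restrictBlock K Z)) ≤ #Z * #Z := by
    simpa [finrank_matrix] using Submodule.finrank_le (LinearMap.range (restrictBlock K Z))
  have := (restrictBlock K Z).finrank_range_add_finrank_ker
  simp only [finrank_matrix, finrank_self, mul_one] at this
  rw [vanishingOnBlock]
  omega

theorem two_mul_card_mul_card_compl_le_finrank_ker [DecidableEq n]
    (f : Module.End K (Matrix n n K)) (Z : Finset n)
    (hf : vanishingOnBlock K Z ≤ (supportedOnBlock K Zᶜ).comap f) :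
    2 * (#Z * #Zᶜ) ≤ finrank K (LinearMap.ker f) := by
  have h₁ := card_mul_card_le_finrank_vanishingOnBlock_add (K := K) Z
  have h₂ := f.finrank_le_finrank_ker_add_of_le_comap hf
  have h₃ := finrank_supportedOnBlock_le (K := K) Zᶜ
  rw [← Z.card_add_card_compl] at h₁
  nlinarith

end Field

variable {n : Type*} [Fintype n]

theorem trace_mul_diagonal {R : Type*} [NonUnitalNonAssocSemiring R] [DecidableEq n]
    (E : Matrix n n R) (δ : n → R) : (E * diagonal δ).trace = ∑ i, E i i * δ i := by
  simp [trace, mul_diagonal]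

namespace PosSemidef

theorem apply_eq_zero_of_diag_eq_zero {𝕜 : Type*} [RCLike 𝕜] {M : Matrix n n 𝕜}
    (hM : M.PosSemidef) {j : n} (hj : M j j = 0) (i : n) : M i j = 0 ∧ M j i = 0 := by
  classical
  have hcol : M *ᵥ Pi.single j 1 = 0 :=
    (hM.dotProduct_mulVec_zero_iff _).mp (by simpa [mulVec_single_one] using hj)
  have hij : M i j = 0 := by simpa using congrFun hcol i
  exact ⟨hij, by rw [← hM.1.apply, hij, star_zero]⟩

theorem mem_supportedOnBlock {𝕜 : Type*} [RCLike 𝕜] {M : Matrix n n 𝕜} (hM : M.PosSemidef)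
    {Y : Finset n} (h : ∀ j ∉ Y, M j j = 0) : M ∈ supportedOnBlock 𝕜 Y := by
  rintro i j (hi | hj)
  · exact (hM.apply_eq_zero_of_diag_eq_zero (h i hi) j).2
  · exact (hM.apply_eq_zero_of_diag_eq_zero (h j hj) i).1

variable [DecidableEq n] {E : Matrix n n ℂ} {δ : n → ℂ}

theorem trace_mul_diagonal_nonneg (hE : E.PosSemidef) (hδ : 0 ≤ δ) :
    0 ≤ (E * diagonal δ).trace := by
  rw [trace_mul_diagonal]
  exact sum_nonneg fun i _ => mul_nonneg hE.diag_nonneg (hδ i)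

theorem mem_supportedOnBlock_of_trace_mul_diagonal_eq_zero (hE : E.PosSemidef) (hδ : 0 ≤ δ)
    (h : (E * diagonal δ).trace = 0) : E ∈ supportedOnBlock ℂ {i | δ i = 0} := by
  refine hE.mem_supportedOnBlock fun i hi => ?_
  rw [trace_mul_diagonal,
    sum_eq_zero_iff_of_nonneg fun i _ => mul_nonneg hE.diag_nonneg (hδ i)] at h
  simp only [mem_filter, mem_univ, true_and] at hi
  exact (mul_eq_zero.mp (h i (mem_univ i))).resolve_right hi

end PosSemidef

end Matrix

theorem HolevoForm.vanishingOnBlock_le_comap {d : ℕ}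
    {φ : Matrix (Fin d) (Fin d) ℂ →ₗ[ℂ] Matrix (Fin d) (Fin d) ℂ} (hφ : HolevoForm φ)
    {δ : Fin d → ℂ} (hδ : 0 ≤ δ) (hfix : φ (diagonal δ) = diagonal δ) :
    vanishingOnBlock ℂ {i | δ i = 0} ≤
      (supportedOnBlock ℂ ({i | δ i = 0} : Finset (Fin d))ᶜ).comap φ := by
  obtain ⟨k, ρ, E, hρ, hE, hφX⟩ := hφ
  have hc (l : Fin k) : 0 ≤ (E l * diagonal δ).trace := (hE l).trace_mul_diagonal_nonneg hδ
  have hρ_supp (l : Fin k) (hl : (E l * diagonal δ).trace ≠ 0) :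
      ρ l ∈ supportedOnBlock ℂ ({i | δ i = 0} : Finset (Fin d))ᶜ := by
    refine (hρ l).mem_supportedOnBlock fun j hj => ?_
    have hdiag : ∑ m, (E m * diagonal δ).trace * ρ m j j = 0 := by
      have := congrFun (congrFun hfix j) j
      rw [hφX] at this
      simp only [mem_compl, mem_filter, mem_univ, true_and, not_not] at hj
      simpa [Matrix.sum_apply, hj] using this
    rw [sum_eq_zero_iff_of_nonneg fun m _ => mul_nonneg (hc m) (hρ m).diag_nonneg] at hdiag
    exact (mul_eq_zero.mp (hdiag l (mem_univ l))).resolve_left hl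
  intro X hX
  rw [Submodule.mem_comap, hφX]
  refine Submodule.sum_mem _ fun l _ => ?_
  by_cases hl : (E l * diagonal δ).trace = 0
  · rw [trace_mul_eq_zero_of_mem_supportedOnBlock_of_mem_vanishingOnBlock
      ((hE l).mem_supportedOnBlock_of_trace_mul_diagonal_eq_zero hδ hl) hX, zero_smul]
    exact zero_mem _
  · exact Submodule.smul_mem _ _ (hρ_supp l hl)

open Unitary in
theorem HolevoForm.conj_unitary {d : ℕ}
    {φ : Matrix (Fin d) (Fin d) ℂ →ₗ[ℂ] Matrix (Fin d) (Fin d) ℂ} (hφ : HolevoForm φ)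
    (u : unitary (Matrix (Fin d) (Fin d) ℂ)) :
    HolevoForm ((conjStarAlgAut ℂ _ u).toAlgEquiv.toLinearEquiv.conj φ) := by
  obtain ⟨k, ρ, E, hρ, hE, hφX⟩ := hφ
  refine ⟨k, fun l => u * ρ l * star (u : Matrix (Fin d) (Fin d) ℂ),
    fun l => u * E l * star (u : Matrix (Fin d) (Fin d) ℂ),
    fun l => (hρ l).mul_mul_conjTranspose_same _, fun l => (hE l).mul_mul_conjTranspose_same _,
    fun X => ?_⟩
  simp only [LinearEquiv.conj_apply_apply, hφX, map_sum, map_smul]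
  refine Finset.sum_congr rfl fun l _ => ?_
  change (E l * (star (u : Matrix (Fin d) (Fin d) ℂ) * X * u)).trace • _ = _
  rw [← mul_assoc, trace_mul_comm, ← mul_assoc, ← mul_assoc]
  rfl

theorem HolevoForm.two_mul_sub_one_le_finrank_ker {d : ℕ}
    {φ : Matrix (Fin d) (Fin d) ℂ →ₗ[ℂ] Matrix (Fin d) (Fin d) ℂ} (hφ : HolevoForm φ)
    {δ : Fin d → ℂ} (hδ : 0 ≤ δ) (hfix : φ (diagonal δ) = diagonal δ)
    (hzero : ∃ i, δ i = 0) (hne : ∃ i, δ i ≠ 0) :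
    2 * (d - 1) ≤ finrank ℂ (LinearMap.ker φ) := by
  set Z : Finset (Fin d) := {i | δ i = 0}
  obtain ⟨i, hi⟩ := hzero
  obtain ⟨j, hj⟩ := hne
  obtain ⟨a, ha⟩ : ∃ a, #Z = a + 1 :=
    Nat.exists_eq_succ_of_ne_zero (card_ne_zero.mpr ⟨i, by simp [Z, hi]⟩)
  obtain ⟨b, hb⟩ : ∃ b, #Zᶜ = b + 1 :=
    Nat.exists_eq_succ_of_ne_zero (card_ne_zero.mpr ⟨j, by simp [Z, hj]⟩)
  have hd : #Z + #Zᶜ = d := Z.card_add_card_compl.trans (Fintype.card_fin d)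
  have hker :=
    two_mul_card_mul_card_compl_le_finrank_ker φ Z (hφ.vanishingOnBlock_le_comap hδ hfix)
  rw [ha, hb] at hker hd
  calc 2 * (d - 1) = 2 * (a + b + 1) := by omega
    _ ≤ 2 * ((a + 1) * (b + 1)) := by nlinarith
    _ ≤ _ := hker

theorem stmt_4_general (d : ℕ)
    (φ : Matrix (Fin d) (Fin d) ℂ →ₗ[ℂ] Matrix (Fin d) (Fin d) ℂ)
    (hφ : HolevoForm φ)
    (A : Matrix (Fin d) (Fin d) ℂ) (hA : A.PosSemidef) (hA0 : A ≠ 0)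
    (hAdet : A.det = 0) (hfix : φ A = A) :
    2 * (d - 1) ≤ Module.finrank ℂ ↥(LinearMap.ker φ) ∧ LinearMap.det φ = 0 := by
  set U := hA.1.eigenvectorUnitary
  set δ : Fin d → ℂ := RCLike.ofReal ∘ hA.1.eigenvalues
  set e := (Unitary.conjStarAlgAut ℂ _ (star U)).toAlgEquiv.toLinearEquiv
  have hD : e A = diagonal δ := by
    change Unitary.conjStarAlgAut ℂ _ (star U) A = _
    rw [← Unitary.conjStarAlgAut_symm, StarAlgEquiv.symm_apply_eq]
    exact hA.1.spectral_theorem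
  have hδ : 0 ≤ δ := fun i => by simpa [δ] using hA.eigenvalues_nonneg i
  have hfixD : e.conj φ (diagonal δ) = diagonal δ := by
    rw [← hD, LinearEquiv.conj_apply_apply, e.symm_apply_apply, hfix]
  obtain ⟨i, -, hi⟩ : ∃ i ∈ univ, δ i = 0 := by
    rw [← prod_eq_zero_iff, ← det_diagonal, ← hD]
    simp [e, hAdet]
  obtain ⟨j, hj⟩ : ∃ j, δ j ≠ 0 := by
    by_contra! h
    exact e.map_ne_zero_iff.mpr hA0 (by simp [hD, show δ = 0 from funext h])
  have hker := (hφ.conj_unitary (star U)).two_mul_sub_one_le_finrank_ker hδ hfixD ⟨i, hi⟩ ⟨j, hj⟩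
  rw [e.finrank_ker_conj] at hker
  have hd : 1 < d := by
    simpa using Fintype.one_lt_card_iff.mpr ⟨i, j, fun hij => hj (hij ▸ hi)⟩
  refine ⟨hker, LinearMap.det_eq_zero_iff_ker_ne_bot.mpr fun h => ?_⟩
  rw [h, finrank_bot] at hker
  omega

/-- A trace-preserving entanglement-breaking (Holevo form) map with a semipositive fixed
point has kernel of dimension at least ; in particular its determinant vanishes. -/
theorem stmt_4 (d : ℕ) (hd : 2 ≤ d)
    (φ : Matrix (Fin d) (Fin d) ℂ →ₗ[ℂ] Matrix (Fin d) (Fin d) ℂ)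
    (hφ : HolevoForm φ) (htp : ∀ X, (φ X).trace = X.trace)
    (A : Matrix (Fin d) (Fin d) ℂ) (hA : A.PosSemidef) (hA0 : A ≠ 0)
    (hAdet : A.det = 0) (hfix : φ A = A) :
    2 * (d - 1) ≤ Module.finrank ℂ ↥(LinearMap.ker φ) ∧ LinearMap.det φ = 0 :=
  stmt_4_general d φ hφ A hA hA0 hAdet hfix
end

section
/- Let ψ be a positive, trace-preserving ℂ-linear map on M_d(ℂ). Suppose the fixed subspace {X ∈ M_d(ℂ) : ψ(X) = X} has complex dimension at least 2. Then ψ admits a semipositive fixed point: there exists A ∈ M_d(ℂ) with A positive semidefinite, A ≠ 0, det A = 0, and ψ(A) = A. -/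
/-!
Since the fixed space has dimension at least 2, the trace vanishes on some nonzero fixed point;
a positive map commutes with `ᴴ`, so the real or imaginary part of that point is a nonzero
traceless Hermitian fixed point `Z`. Write `Z = P - N` with `P, N ⪰ 0` and `Q` the spectral
projection onto the nonnegative eigenspaces of `Z`. Positivity and trace preservation give
`Tr (Q ψ(N) Q) + Tr ((1 - Q) ψ(P) (1 - Q)) = Tr ψ(P) - Tr P = 0`, so both compressions vanish,
and compressing `ψ(P) = ψ(N) + P - N` by `Q` yields `ψ(P) = P`. Since `Tr P = Tr N` and `Z ≠ 0`,
`P ≠ 0`; and `P` is singular, for otherwise `Q = 1`, `N = 0` and `Z = P` is positive and traceless.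
-/

open Matrix Kronecker
open scoped ComplexOrder

open scoped ComplexStarModule

theorem Submodule.inf_ker_ne_bot_of_finrank_lt {K V W : Type*} [Field K] [AddCommGroup V]
    [Module K V] [AddCommGroup W] [Module K W] [FiniteDimensional K V] [FiniteDimensional K W]
    {p : Submodule K V} {f : V →ₗ[K] W} (h : Module.finrank K W < Module.finrank K p) :
    p ⊓ LinearMap.ker f ≠ ⊥ := by
  obtain ⟨w, hw, hw0⟩ := Submodule.exists_mem_ne_zero_of_ne_bot
    (LinearMap.ker_ne_bot_of_finrank_lt (f := f ∘ₗ p.subtype) h)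
  exact (Submodule.ne_bot_iff _).mpr ⟨w, ⟨w.2, hw⟩, by simpa using hw0⟩

theorem Submodule.exists_isSelfAdjoint_mem_ne_zero {A : Type*} [AddCommGroup A] [Module ℂ A]
    [StarAddMonoid A] [StarModule ℂ A] {S : Submodule ℂ A} (hS : ∀ x ∈ S, star x ∈ S)
    (hne : S ≠ ⊥) : ∃ x ∈ S, IsSelfAdjoint x ∧ x ≠ 0 := by
  obtain ⟨w, hw, hw0⟩ := S.exists_mem_ne_zero_of_ne_bot hne
  have hre : (ℜ w : A) ∈ S := by
    rw [realPart_apply_coe]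
    exact S.smul_of_tower_mem _ (S.add_mem hw (hS w hw))
  have him : (ℑ w : A) ∈ S := by
    rw [imaginaryPart_apply_coe]
    exact S.smul_mem _ (S.smul_of_tower_mem _ (S.sub_mem hw (hS w hw)))
  by_cases hre0 : (ℜ w : A) = 0
  · refine ⟨ℑ w, him, (ℑ w).2, fun him0 => hw0 ?_⟩
    rw [← realPart_add_I_smul_imaginaryPart w, hre0, him0, smul_zero, add_zero]
  · exact ⟨ℜ w, hre, (ℜ w).2, hre0⟩

namespace Matrix
variable {n : Type*} [Fintype n] [DecidableEq n]

open scoped MatrixOrder in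
theorem IsHermitian.exists_posSemidef_sub_eq {Z : Matrix n n ℂ} (hZ : Z.IsHermitian) :
    ∃ P N Q : Matrix n n ℂ, P.PosSemidef ∧ N.PosSemidef ∧ Qᴴ = Q ∧ Q * Q = Q ∧
      Q * P = P ∧ Q * N = 0 ∧ P - N = Z := by
  have hcont (f : ℝ → ℝ) : ContinuousOn f (spectrum ℝ Z) := Z.finite_real_spectrum.continuousOn f
  set q : ℝ → ℝ := fun x => if 0 ≤ x then 1 else 0
  refine ⟨cfc (fun x : ℝ => max x 0) Z, cfc (fun x : ℝ => max (-x) 0) Z, cfc q Z,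
    nonneg_iff_posSemidef.mp (cfc_nonneg fun x _ => le_max_right _ _),
    nonneg_iff_posSemidef.mp (cfc_nonneg fun x _ => le_max_right _ _),
    (cfc_predicate q Z).star_eq, ?_, ?_, ?_, ?_⟩
  · rw [← cfc_mul q q Z (hcont q) (hcont q)]
    exact cfc_congr fun x _ => by by_cases h : 0 ≤ x <;> simp [q, h]
  · rw [← cfc_mul q _ Z (hcont q) (hcont _)]
    exact cfc_congr fun x _ => by by_cases h : 0 ≤ x <;> simp [q, h, le_of_not_ge]
  · rw [← cfc_mul q _ Z (hcont q) (hcont _), ← cfc_zero ℝ Z]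
    exact cfc_congr fun x _ => by by_cases h : 0 ≤ x <;> simp [q, h]
  · rw [← cfc_sub _ _ Z (hcont _) (hcont _)]
    conv_rhs => rw [← cfc_id' ℝ Z]
    exact cfc_congr fun x _ => by by_cases h : 0 ≤ x <;> simp [h, le_of_not_ge]

open scoped MatrixOrder in
theorem PosSemidef.mul_eq_zero_of_conjTranspose_mul_mul_eq_zero {A B : Matrix n n ℂ}
    (hA : A.PosSemidef) (h : Bᴴ * A * B = 0) : A * B = 0 := by
  obtain ⟨S, hS, rfl⟩ : ∃ S : Matrix n n ℂ, Sᴴ = S ∧ S * S = A :=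
    have hA₀ : 0 ≤ A := nonneg_iff_posSemidef.mpr hA
    ⟨CFC.sqrt A, (CFC.sqrt_nonneg A).isSelfAdjoint.star_eq, CFC.sqrt_mul_sqrt_self A⟩
  have hSB : S * B = 0 := by
    rw [← conjTranspose_mul_self_eq_zero, conjTranspose_mul, hS, ← h]
    simp only [Matrix.mul_assoc]
  rw [Matrix.mul_assoc, hSB, Matrix.mul_zero]

theorem PosSemidef.mul_eq_zero_of_trace_conjTranspose_mul_mul_eq_zero {A B : Matrix n n ℂ}
    (hA : A.PosSemidef) (h : (Bᴴ * A * B).trace = 0) : A * B = 0 :=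
  hA.mul_eq_zero_of_conjTranspose_mul_mul_eq_zero
    ((hA.conjTranspose_mul_mul_same B).trace_eq_zero_iff.mp h)

theorem trace_mul_mul_add_trace_mul_mul {Q : Matrix n n ℂ} (hQ : Q * Q = Q) (A : Matrix n n ℂ) :
    (Q * A * Q).trace + ((1 - Q) * A * (1 - Q)).trace = A.trace := by
  have hsplit : (1 - Q) * A * (1 - Q) = A - Q * A - A * Q + Q * A * Q := by noncomm_ring
  have hcycle : (Q * A * Q).trace = (A * Q).trace := by
    rw [Matrix.mul_assoc, trace_mul_comm, Matrix.mul_assoc, hQ]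
  rw [hsplit, trace_add, trace_sub, trace_sub, hcycle, trace_mul_comm Q A]
  ring

section PositiveMap

variable (ψ : Matrix n n ℂ →ₗ[ℂ] Matrix n n ℂ)
  (hpos : ∀ X : Matrix n n ℂ, X.PosSemidef → (ψ X).PosSemidef)
  (htp : ∀ X, (ψ X).trace = X.trace)

include hpos htp in
theorem map_eq_self_of_map_sub_eq_self {P N Q : Matrix n n ℂ} (hP : P.PosSemidef)
    (hN : N.PosSemidef) (hQ : Qᴴ = Q) (hQQ : Q * Q = Q) (hQP : Q * P = P) (hQN : Q * N = 0)
    (hfix : ψ (P - N) = P - N) : ψ P = P := by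
  have hψP := hpos P hP
  have hψN := hpos N hN
  have hR : (1 - Q)ᴴ = 1 - Q := by rw [conjTranspose_sub, conjTranspose_one, hQ]
  have hPQ : P * Q = P := by simpa [hQ, hP.1.eq] using congrArg conjTranspose hQP
  have hdiff : ψ P - ψ N = P - N := by rw [← map_sub, hfix]
  have hcompress : Q * ψ P * Q - Q * ψ N * Q = P := by
    rw [← Matrix.sub_mul, ← Matrix.mul_sub, hdiff, Matrix.mul_sub, Matrix.sub_mul, hQP, hPQ,
      hQN, Matrix.zero_mul, sub_zero]
  have hbalance : (Q * ψ N * Q).trace + ((1 - Q) * ψ P * (1 - Q)).trace = 0 := by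
    have hsplit := trace_mul_mul_add_trace_mul_mul hQQ (ψ P)
    have hP_trace := congrArg trace hcompress
    rw [htp] at hsplit
    rw [trace_sub] at hP_trace
    linear_combination hsplit - hP_trace
  have hψN_compress : 0 ≤ (Q * ψ N * Q).trace := by
    have := (hψN.conjTranspose_mul_mul_same Q).trace_nonneg
    rwa [hQ] at this
  have hψP_compress : 0 ≤ ((1 - Q) * ψ P * (1 - Q)).trace := by
    have := (hψP.conjTranspose_mul_mul_same (1 - Q)).trace_nonneg
    rwa [hR] at this
  obtain ⟨hψNQ, hψPR⟩ := (add_eq_zero_iff_of_nonneg hψN_compress hψP_compress).mp hbalance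
  replace hψNQ := hψN.mul_eq_zero_of_trace_conjTranspose_mul_mul_eq_zero (by rwa [hQ])
  replace hψPR := hψP.mul_eq_zero_of_trace_conjTranspose_mul_mul_eq_zero (by rwa [hR])
  have hQψN : Q * ψ N = 0 := by simpa [hQ, hψN.1.eq] using congrArg conjTranspose hψNQ
  have hRψP : (1 - Q) * ψ P = 0 := by simpa [hR, hψP.1.eq] using congrArg conjTranspose hψPR
  calc ψ P = Q * ψ P * Q := by
        rw [Matrix.mul_sub, Matrix.mul_one, sub_eq_zero] at hψPR
        rw [Matrix.sub_mul, Matrix.one_mul, sub_eq_zero] at hRψP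
        rw [← hRψP, ← hψPR]
    _ = Q * ψ N * Q + P := eq_add_of_sub_eq' hcompress
    _ = P := by rw [hQψN, Matrix.zero_mul, zero_add]

include hpos in
theorem isHermitian_map_of_isHermitian {Z : Matrix n n ℂ} (hZ : Z.IsHermitian) :
    (ψ Z).IsHermitian := by
  obtain ⟨P, N, -, hP, hN, -, -, -, -, rfl⟩ := hZ.exists_posSemidef_sub_eq
  rw [map_sub]
  exact (hpos P hP).isHermitian.sub (hpos N hN).isHermitian

include hpos in
theorem map_conjTranspose_of_posSemidef (X : Matrix n n ℂ) : ψ Xᴴ = (ψ X)ᴴ := by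
  have hre := isHermitian_map_of_isHermitian ψ hpos (ℜ X).2
  have him := isHermitian_map_of_isHermitian ψ hpos (ℑ X).2
  rw [← realPart_add_I_smul_imaginaryPart X]
  simp [← star_eq_conjTranspose, star_add, star_smul, (ℜ X).2.star_eq, (ℑ X).2.star_eq,
    hre.star_eq, him.star_eq]

include hpos htp in
theorem exists_posSemidef_det_eq_zero_map_eq_self {Z : Matrix n n ℂ} (hZ : Z.IsHermitian)
    (hfix : ψ Z = Z) (htr : Z.trace = 0) (hZ0 : Z ≠ 0) :
    ∃ A : Matrix n n ℂ, A.PosSemidef ∧ A ≠ 0 ∧ A.det = 0 ∧ ψ A = A := by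
  obtain ⟨P, N, Q, hP, hN, hQ, hQQ, hQP, hQN, rfl⟩ := hZ.exists_posSemidef_sub_eq
  refine ⟨P, hP, ?_, ?_, map_eq_self_of_map_sub_eq_self ψ hpos htp hP hN hQ hQQ hQP hQN hfix⟩
  · rintro rfl
    rw [zero_sub, trace_neg, neg_eq_zero, hN.trace_eq_zero_iff] at htr
    simp [htr] at hZ0
  · by_contra hdet
    have hPunit : IsUnit P := (isUnit_iff_isUnit_det P).mpr (isUnit_iff_ne_zero.mpr hdet)
    have hQ1 : Q = 1 := hPunit.mul_left_inj.mp (hQP.trans (Matrix.one_mul P).symm)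
    rw [hQ1, Matrix.one_mul] at hQN
    rw [hQN, sub_zero, hP.trace_eq_zero_iff] at htr
    simp [hQN, htr] at hZ0

end PositiveMap
end Matrix

/-- A positive trace-preserving map whose fixed subspace has dimension at least 2 admits
a semipositive fixed point. -/
theorem stmt_5 (d : ℕ) (ψ : Matrix (Fin d) (Fin d) ℂ →ₗ[ℂ] Matrix (Fin d) (Fin d) ℂ)
    (hpos : ∀ X : Matrix (Fin d) (Fin d) ℂ, X.PosSemidef → (ψ X).PosSemidef)
    (htp : ∀ X, (ψ X).trace = X.trace)
    (hdim : 2 ≤ Module.finrank ℂ ↥(LinearMap.ker (ψ - LinearMap.id))) :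
    ∃ A : Matrix (Fin d) (Fin d) ℂ, A.PosSemidef ∧ A ≠ 0 ∧ A.det = 0 ∧ ψ A = A := by
  set S := LinearMap.ker (ψ - LinearMap.id) ⊓ LinearMap.ker (traceLinearMap (Fin d) ℂ ℂ)
  have hS_mem (X : Matrix (Fin d) (Fin d) ℂ) : X ∈ S ↔ ψ X = X ∧ X.trace = 0 := by
    simp [S, sub_eq_zero]
  have hS_star : ∀ X ∈ S, star X ∈ S := by
    intro X
    rw [hS_mem, hS_mem, star_eq_conjTranspose, map_conjTranspose_of_posSemidef ψ hpos,
      trace_conjTranspose]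
    rintro ⟨hXfix, hXtr⟩
    rw [hXfix, hXtr, star_zero]
    exact ⟨rfl, rfl⟩
  have hS_ne : S ≠ ⊥ := Submodule.inf_ker_ne_bot_of_finrank_lt (by rw [Module.finrank_self]; omega)
  obtain ⟨Z, hZS, hZ, hZ0⟩ := S.exists_isSelfAdjoint_mem_ne_zero hS_star hS_ne
  obtain ⟨hZfix, hZtr⟩ := (hS_mem Z).mp hZS
  exact exists_posSemidef_det_eq_zero_map_eq_self ψ hpos htp hZ hZfix hZtr hZ0
end

section
/- Let φ be a quantum channel on M_d(ℂ) whose determinant (as a ℂ-linear endomorphism of M_d(ℂ)) is nonzero. Suppose there exist n ≥ 1 and a matrix A ∈ M_d(ℂ) with A positive semidefinite, A ≠ 0, det A = 0, and φⁿ(A) = A (a semipositive fixed point of some power of φ). Then φ is entanglement-saving: for every N ≥ 1, the Choi matrix of φ^N is not separable. -/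
/-!
If `φ ^ N` were entanglement-breaking, then `ψ = φ ^ (n * N) = φ ^ (n * N - N) ∘ φ ^ N` would be
of measure-and-prepare form `X ↦ ∑ i, tr (F i * X) • R i` with all `F i`, `R i` positive
semidefinite (the outer factor is a positive map), it would be injective because `det φ ≠ 0`, and
it would fix `A`. In an eigenbasis of `A` let `Z` be the set of indices of zero eigenvalues; it is
nonempty as `det A = 0` and proper as `A ≠ 0`. A term with `tr (F i * A) = 0` has `F i` supported
on `Z × Z`, and the fixed-point equation read on the diagonal entries in `Z` forces every other
`R i` to vanish on the rows and columns indexed by `Z`. So `ψ` maps the matrices vanishing on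
`Z × Z`, of dimension `d² - z²`, injectively into the matrices supported on `Zᶜ × Zᶜ`, of
dimension `(d - z)² < d² - z²`.
-/

open Matrix Kronecker
open scoped ComplexOrder

/-- The Choi matrix `C(φ) = Σ_{i,j} φ(E_{ij}) ⊗ E_{ij}` of a linear map on `M_d(ℂ)`. -/
noncomputable def choi {d : ℕ} (φ : Matrix (Fin d) (Fin d) ℂ →ₗ[ℂ] Matrix (Fin d) (Fin d) ℂ) :
    Matrix (Fin d × Fin d) (Fin d × Fin d) ℂ :=
  ∑ i : Fin d, ∑ j : Fin d, φ (single i j 1) ⊗ₖ single i j (1 : ℂ)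

/-- A quantum channel: trace-preserving and completely positive (positive semidefinite
Choi matrix). -/
def IsQChannel {d : ℕ} (φ : Matrix (Fin d) (Fin d) ℂ →ₗ[ℂ] Matrix (Fin d) (Fin d) ℂ) : Prop :=
  (∀ X, (φ X).trace = X.trace) ∧ (choi φ).PosSemidef

namespace Matrix

section SupportedOn

variable {n R : Type*} [Semiring R]

def supportedOn (s : Finset (n × n)) : Submodule R (Matrix n n R) where
  carrier := {X | ∀ p ∉ s, X p.1 p.2 = 0}
  add_mem' hX hY p hp := by simp [hX p hp, hY p hp]
  zero_mem' _ _ := rfl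
  smul_mem' c X hX p hp := by simp [hX p hp]

open Classical in
noncomputable def supportedOnEquiv (s : Finset (n × n)) :
    supportedOn (R := R) s ≃ₗ[R] (s → R) where
  toFun X p := (X : Matrix n n R) p.1.1 p.1.2
  map_add' _ _ := rfl
  map_smul' _ _ := rfl
  invFun f := ⟨of fun a b => if h : (a, b) ∈ s then f ⟨(a, b), h⟩ else 0,
    fun p hp => dif_neg hp⟩
  left_inv X := by
    ext a b
    by_cases h : (a, b) ∈ s
    · simp [h]
    · simp [h, X.2 (a, b) h]
  right_inv f := by ext p; simp

theorem finrank_supportedOn [StrongRankCondition R] (s : Finset (n × n)) :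
    Module.finrank R (supportedOn (R := R) s) = s.card := by
  simp [(supportedOnEquiv s).finrank_eq]

end SupportedOn

variable {n 𝕜 : Type*} [Fintype n] [RCLike 𝕜]

theorem PosSemidef.apply_eq_zero_of_diag_eq_zero_left {M : Matrix n n 𝕜} (hM : M.PosSemidef)
    {p : n} (hp : M p p = 0) (q : n) : M q p = 0 := by
  classical
  have h := (hM.dotProduct_mulVec_zero_iff (Pi.single p 1)).1 (by simpa [mulVec_single_one])
  simpa [mulVec_single_one] using congrFun h q

theorem PosSemidef.apply_eq_zero_of_diag_eq_zero_right {M : Matrix n n 𝕜} (hM : M.PosSemidef)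
    {p : n} (hp : M p p = 0) (q : n) : M p q = 0 := by
  rw [← hM.isHermitian.apply p q, hM.apply_eq_zero_of_diag_eq_zero_left hp, star_zero]

variable [DecidableEq n]

theorem PosSemidef.trace_mul_diagonal_nonneg_s6 {F : Matrix n n 𝕜} (hF : F.PosSemidef) {D : n → 𝕜}
    (hD : 0 ≤ D) : 0 ≤ (F * diagonal D).trace :=
  Finset.sum_nonneg fun p _ => by
    simpa only [diag_apply, mul_diagonal] using mul_nonneg hF.diag_nonneg (hD p)

theorem PosSemidef.diag_eq_zero_of_trace_mul_diagonal_eq_zero {F : Matrix n n 𝕜}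
    (hF : F.PosSemidef) {D : n → 𝕜} (hD : 0 ≤ D) (h : (F * diagonal D).trace = 0) {p : n}
    (hp : D p ≠ 0) : F p p = 0 := by
  simp only [trace, diag_apply, mul_diagonal] at h
  have := (Finset.sum_eq_zero_iff_of_nonneg fun q _ => mul_nonneg hF.diag_nonneg (hD q)).1 h p
    (Finset.mem_univ p)
  exact (mul_eq_zero.1 this).resolve_right hp

theorem PosSemidef.trace_mul_eq_zero_of_mem_supportedOn {F X : Matrix n n 𝕜}
    (hF : F.PosSemidef) {Z : Finset n} (hFZ : ∀ p ∉ Z, F p p = 0)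
    (hX : X ∈ supportedOn (Z ×ˢ Z)ᶜ) : (F * X).trace = 0 := by
  refine Finset.sum_eq_zero fun p _ => ?_
  simp only [diag_apply, mul_apply]
  refine Finset.sum_eq_zero fun q _ => ?_
  by_cases hp : p ∈ Z
  · by_cases hq : q ∈ Z
    · rw [hX (q, p) (by simp [hp, hq]), mul_zero]
    · rw [hF.apply_eq_zero_of_diag_eq_zero_left (hFZ q hq), zero_mul]
  · rw [hF.apply_eq_zero_of_diag_eq_zero_right (hFZ p hp), zero_mul]

theorem PosSemidef.mem_supportedOn_of_diag_eq_zero {R : Matrix n n 𝕜} (hR : R.PosSemidef)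
    {Z : Finset n} (hRZ : ∀ p ∈ Z, R p p = 0) : R ∈ supportedOn (Zᶜ ×ˢ Zᶜ) := by
  rintro ⟨p, q⟩ hpq
  rw [Finset.mem_product, Finset.mem_compl, Finset.mem_compl, not_and_or, not_not, not_not] at hpq
  rcases hpq with hp | hq
  · exact hR.apply_eq_zero_of_diag_eq_zero_right (hRZ p hp) q
  · exact hR.apply_eq_zero_of_diag_eq_zero_left (hRZ q hq) p

end Matrix

section Choi

variable {d : ℕ}

theorem choi_apply (φ : Matrix (Fin d) (Fin d) ℂ →ₗ[ℂ] Matrix (Fin d) (Fin d) ℂ)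
    (a i b j : Fin d) : choi φ (a, i) (b, j) = φ (single i j 1) a b := by
  simp [choi, Matrix.sum_apply, kroneckerMap_apply, single_apply, ite_and]

theorem map_apply_eq_sum_choi (φ : Matrix (Fin d) (Fin d) ℂ →ₗ[ℂ] Matrix (Fin d) (Fin d) ℂ)
    (X : Matrix (Fin d) (Fin d) ℂ) (a b : Fin d) :
    φ X a b = ∑ i, ∑ j, X i j * choi φ (a, i) (b, j) := by
  conv_lhs => rw [matrix_eq_sum_single X]
  simp only [map_sum, Matrix.sum_apply, choi_apply]
  refine Finset.sum_congr rfl fun i _ => Finset.sum_congr rfl fun j _ => ?_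
  rw [show single i j (X i j) = X i j • single i j 1 by simp [smul_single], map_smul,
    Matrix.smul_apply, smul_eq_mul]

open scoped MatrixOrder in
theorem exists_kraus_of_posSemidef_choi
    {φ : Matrix (Fin d) (Fin d) ℂ →ₗ[ℂ] Matrix (Fin d) (Fin d) ℂ} (hφ : (choi φ).PosSemidef) :
    ∃ K : Fin d × Fin d → Matrix (Fin d) (Fin d) ℂ, ∀ X, φ X = ∑ t, K t * X * (K t)ᴴ := by
  obtain ⟨N, hN⟩ := CStarAlgebra.nonneg_iff_eq_star_mul_self.mp hφ.nonneg
  refine ⟨fun t => of fun a i => star (N t (a, i)), fun X => ?_⟩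
  ext a b
  simp only [map_apply_eq_sum_choi, hN, Matrix.sum_apply, mul_apply, star_eq_conjTranspose,
    conjTranspose_apply, of_apply, star_star, Finset.mul_sum, Finset.sum_mul]
  rw [Finset.sum_comm]
  refine (Finset.sum_congr rfl fun j _ => Finset.sum_comm).trans Finset.sum_comm |>.trans ?_
  exact Finset.sum_congr rfl fun t _ => Finset.sum_congr rfl fun j _ =>
    Finset.sum_congr rfl fun i _ => by ring

theorem posSemidef_map_of_posSemidef_choi
    {φ : Matrix (Fin d) (Fin d) ℂ →ₗ[ℂ] Matrix (Fin d) (Fin d) ℂ} (hφ : (choi φ).PosSemidef)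
    {X : Matrix (Fin d) (Fin d) ℂ} (hX : X.PosSemidef) : (φ X).PosSemidef := by
  obtain ⟨K, hK⟩ := exists_kraus_of_posSemidef_choi hφ
  rw [hK]
  exact posSemidef_sum _ fun t _ => hX.mul_mul_conjTranspose_same (K t)

theorem posSemidef_pow_map_of_posSemidef_choi
    {φ : Matrix (Fin d) (Fin d) ℂ →ₗ[ℂ] Matrix (Fin d) (Fin d) ℂ} (hφ : (choi φ).PosSemidef)
    (m : ℕ) {X : Matrix (Fin d) (Fin d) ℂ} (hX : X.PosSemidef) : ((φ ^ m) X).PosSemidef := by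
  rw [Module.End.pow_apply]
  induction m with
  | zero => exact hX
  | succ m ih =>
    rw [Function.iterate_succ_apply']
    exact posSemidef_map_of_posSemidef_choi hφ ih

end Choi

section MeasurePrepare

variable {m n : Type*} [Fintype m]

def IsMeasurePrepare (ψ : Matrix m m ℂ →ₗ[ℂ] Matrix n n ℂ) : Prop :=
  ∃ (k : ℕ) (F : Fin k → Matrix m m ℂ) (R : Fin k → Matrix n n ℂ),
    (∀ i, (F i).PosSemidef) ∧ (∀ i, (R i).PosSemidef) ∧ ∀ X, ψ X = ∑ i, (F i * X).trace • R i

theorem isMeasurePrepare_of_matSep_choi {d : ℕ}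
    {φ : Matrix (Fin d) (Fin d) ℂ →ₗ[ℂ] Matrix (Fin d) (Fin d) ℂ} (h : MatSep (choi φ)) :
    IsMeasurePrepare φ := by
  obtain ⟨k, R, B, hR, hB, hchoi⟩ := h
  refine ⟨k, fun i => (B i)ᵀ, R, fun i => (hB i).transpose, hR, fun X => ?_⟩
  ext a b
  simp only [map_apply_eq_sum_choi, hchoi, Matrix.sum_apply, kroneckerMap_apply, Matrix.smul_apply,
    trace, diag_apply, mul_apply, transpose_apply, smul_eq_mul, Finset.mul_sum, Finset.sum_mul]
  rw [Finset.sum_comm]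
  refine (Finset.sum_congr rfl fun j _ => Finset.sum_comm).trans Finset.sum_comm |>.trans ?_
  exact Finset.sum_congr rfl fun t _ => Finset.sum_congr rfl fun j _ =>
    Finset.sum_congr rfl fun i _ => by ring

theorem IsMeasurePrepare.comp {l : Type*} {ψ : Matrix m m ℂ →ₗ[ℂ] Matrix n n ℂ}
    (hψ : IsMeasurePrepare ψ) {θ : Matrix n n ℂ →ₗ[ℂ] Matrix l l ℂ}
    (hθ : ∀ X, X.PosSemidef → (θ X).PosSemidef) : IsMeasurePrepare (θ ∘ₗ ψ) := by
  obtain ⟨k, F, R, hF, hR, hψ⟩ := hψ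
  exact ⟨k, F, fun i => θ (R i), hF, fun i => hθ _ (hR i), fun X => by simp [hψ]⟩

theorem IsMeasurePrepare.comp_conjStarAlgAut [DecidableEq m]
    {ψ : Matrix m m ℂ →ₗ[ℂ] Matrix n n ℂ} (hψ : IsMeasurePrepare ψ) (U : unitary (Matrix m m ℂ)) :
    IsMeasurePrepare (ψ ∘ₗ (Unitary.conjStarAlgAut ℂ _ U).toAlgEquiv.toLinearMap) := by
  obtain ⟨k, F, R, hF, hR, hψ⟩ := hψ
  refine ⟨k, fun i => star (U : Matrix m m ℂ) * F i * U, R, fun i => ?_, hR, fun X => ?_⟩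
  · simpa [star_eq_conjTranspose] using (hF i).conjTranspose_mul_mul_same (U : Matrix m m ℂ)
  · simp [hψ, ← Matrix.mul_assoc, trace_mul_cycle _ _ (star (U : Matrix m m ℂ))]

end MeasurePrepare

section FixedPoint

variable {n : Type*} [Fintype n] [DecidableEq n] {ψ : Matrix n n ℂ →ₗ[ℂ] Matrix n n ℂ}

theorem IsMeasurePrepare.le_comap_supportedOn (hψ : IsMeasurePrepare ψ) {D : n → ℂ}
    (hD : 0 ≤ D) (hfix : ψ (diagonal D) = diagonal D) {Z : Finset n}
    (hZ : ∀ p, p ∈ Z ↔ D p = 0) : supportedOn (Z ×ˢ Z)ᶜ ≤ (supportedOn (Zᶜ ×ˢ Zᶜ)).comap ψ := by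
  obtain ⟨k, F, R, hF, hR, hψ⟩ := hψ
  have hRdiag : ∀ t, (F t * diagonal D).trace ≠ 0 → ∀ p, D p = 0 → R t p p = 0 := by
    intro t ht p hp
    have hsum : ∑ s, (F s * diagonal D).trace * R s p p = 0 := by
      simpa [hψ, Matrix.sum_apply, hp] using congrFun (congrFun hfix p) p
    have := (Finset.sum_eq_zero_iff_of_nonneg fun s _ =>
      mul_nonneg ((hF s).trace_mul_diagonal_nonneg_s6 hD) (hR s).diag_nonneg).1 hsum t
      (Finset.mem_univ t)
    exact (mul_eq_zero.1 this).resolve_left ht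
  intro X hX
  rw [Submodule.mem_comap, hψ]
  refine Submodule.sum_mem _ fun t _ => ?_
  by_cases ht : (F t * diagonal D).trace = 0
  · have hFdiag : ∀ p ∉ Z, F t p p = 0 := fun p hp =>
      (hF t).diag_eq_zero_of_trace_mul_diagonal_eq_zero hD ht ((hZ p).not.1 hp)
    rw [(hF t).trace_mul_eq_zero_of_mem_supportedOn hFdiag hX, zero_smul]
    exact Submodule.zero_mem _
  · refine Submodule.smul_mem _ _ ((hR t).mem_supportedOn_of_diag_eq_zero fun p hp => ?_)
    exact hRdiag t ht p ((hZ p).1 hp)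

theorem IsMeasurePrepare.not_injective_of_fixed_diagonal (hψ : IsMeasurePrepare ψ) {D : n → ℂ}
    (hD : 0 ≤ D) (hD0 : ∃ p, D p = 0) (hD1 : ∃ p, D p ≠ 0)
    (hfix : ψ (diagonal D) = diagonal D) : ¬ Function.Injective ψ := by
  intro hinj
  set Z : Finset n := Finset.univ.filter fun p => D p = 0
  have hmaps := hψ.le_comap_supportedOn hD hfix (Z := Z) (by simp [Z])
  have hle := LinearMap.finrank_le_finrank_of_injective
    (f := ψ.restrict (q := supportedOn (Zᶜ ×ˢ Zᶜ)) hmaps)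
    fun X Y h => Subtype.ext (hinj (congrArg Subtype.val h))
  rw [finrank_supportedOn, finrank_supportedOn, Finset.card_compl, Finset.card_product,
    Finset.card_product, Fintype.card_prod] at hle
  have hZ : 0 < Z.card := by
    obtain ⟨p, hp⟩ := hD0
    exact Finset.card_pos.2 ⟨p, by simp [Z, hp]⟩
  have hZc : 0 < Zᶜ.card := by
    obtain ⟨p, hp⟩ := hD1
    exact Finset.card_pos.2 ⟨p, by simp [Z, hp]⟩
  rw [← Finset.card_add_card_compl Z] at hle
  have hsq : Z.card * Z.card ≤ (Z.card + Zᶜ.card) * (Z.card + Zᶜ.card) := by nlinarith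
  zify [hsq] at hle
  nlinarith

theorem IsMeasurePrepare.not_injective_of_fixed (hψ : IsMeasurePrepare ψ)
    {A : Matrix n n ℂ} (hA : A.PosSemidef) (hA0 : A ≠ 0) (hAdet : A.det = 0) (hfix : ψ A = A) :
    ¬ Function.Injective ψ := by
  intro hinj
  set c := Unitary.conjStarAlgAut ℂ _ hA.1.eigenvectorUnitary
  set D : n → ℂ := RCLike.ofReal ∘ hA.1.eigenvalues
  have hAD : A = c (diagonal D) := hA.1.spectral_theorem
  have hconj :
      IsMeasurePrepare (c.symm.toAlgEquiv.toLinearMap ∘ₗ ψ ∘ₗ c.toAlgEquiv.toLinearMap) :=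
    (hψ.comp_conjStarAlgAut _).comp fun X hX => by
      simpa [c, Unitary.conjStarAlgAut_symm_apply, star_eq_conjTranspose] using
        hX.conjTranspose_mul_mul_same (hA.1.eigenvectorUnitary : Matrix n n ℂ)
  refine hconj.not_injective_of_fixed_diagonal (D := D) (fun p => ?_) ?_ ?_ ?_ ?_
  · simpa [D] using hA.eigenvalues_nonneg p
  · rw [hA.1.det_eq_prod_eigenvalues, Finset.prod_eq_zero_iff] at hAdet
    obtain ⟨p, -, hp⟩ := hAdet
    exact ⟨p, hp⟩
  · by_contra! hD
    exact hA0 (by rw [hAD, funext hD, diagonal_zero, map_zero])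
  · show c.symm (ψ (c (diagonal D))) = diagonal D
    rw [← hAD, hfix, hAD, StarAlgEquiv.symm_apply_apply]
  · exact c.symm.injective.comp (hinj.comp c.injective)

end FixedPoint

/-- A quantum channel with nonzero determinant such that some power has a semipositive
fixed point is entanglement-saving. -/
theorem stmt_6 (d : ℕ) (φ : Matrix (Fin d) (Fin d) ℂ →ₗ[ℂ] Matrix (Fin d) (Fin d) ℂ)
    (hφ : IsQChannel φ) (hdet : LinearMap.det φ ≠ 0)
    (hsemi : ∃ n ≥ 1, ∃ A : Matrix (Fin d) (Fin d) ℂ,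
      A.PosSemidef ∧ A ≠ 0 ∧ A.det = 0 ∧ (φ ^ n) A = A) :
    ∀ N ≥ 1, ¬ MatSep (choi (φ ^ N)) := by
  intro N _ hsep
  obtain ⟨n, hn, A, hA, hA0, hAdet, hAfix⟩ := hsemi
  have hmp : IsMeasurePrepare (φ ^ (n * N)) := by
    rw [← pow_sub_mul_pow φ (Nat.le_mul_of_pos_left N hn), Module.End.mul_eq_comp]
    exact (isMeasurePrepare_of_matSep_choi hsep).comp fun X hX =>
      posSemidef_pow_map_of_posSemidef_choi hφ.2 _ hX
  have hinj : Function.Injective (φ ^ (n * N)) :=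
    ((Module.End.isUnit_iff _).1 ((LinearMap.isUnit_iff_isUnit_det _).2
      (by rw [map_pow]; exact hdet.isUnit.pow _))).1
  have hfix : (φ ^ (n * N)) A = A := by
    rw [pow_mul, Module.End.pow_apply]
    exact Function.IsFixedPt.iterate hAfix N
  exact hmp.not_injective_of_fixed hA hA0 hAdet hfix hinj
end

section
/- Let M be a real 3×3 matrix and c ∈ ℝ³, and suppose that ‖M·n + c‖ ≤ 1 (Euclidean norm) for every unit vector n ∈ ℝ³ (this is the positivity condition for the qubit map with Bloch representation (M, c)). Then ‖M·n‖² + ‖c‖² ≤ 1 for every unit vector n ∈ ℝ³. In particular the operator norm of M is at most 1, and if ‖M·n‖ = 1 for some unit vector n, then c = 0. -/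
open Matrix

/-- The Euclidean norm on `ℝ³`. -/
noncomputable def enorm3 (v : Fin 3 → ℝ) : ℝ :=
  Real.sqrt (∑ i, v i ^ 2)

lemma enorm3_nonneg (v : Fin 3 → ℝ) : 0 ≤ enorm3 v := Real.sqrt_nonneg _

lemma sq_enorm3 (v : Fin 3 → ℝ) : enorm3 v ^ 2 = ∑ i, v i ^ 2 := by
  apply Real.sq_sqrt
  exact Finset.sum_nonneg fun i _ => sq_nonneg _

lemma enorm3_neg (v : Fin 3 → ℝ) : enorm3 (-v) = enorm3 v := by
  unfold enorm3
  congr 1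
  apply Finset.sum_congr rfl
  intro i _
  simp

lemma sum_sq_le_of_enorm3_le_one (v : Fin 3 → ℝ) (h : enorm3 v ≤ 1) :
    ∑ i, v i ^ 2 ≤ 1 := by
  rw [← sq_enorm3]
  nlinarith [enorm3_nonneg v]

/-- If a qubit map with Bloch representation `(M, c)` is positive, i.e.
`‖M n + c‖ ≤ 1` for all unit `n`, then `‖M n‖² + ‖c‖² ≤ 1` for all unit `n`;
in particular `‖M‖ ≤ 1`, and if `‖M n‖ = 1` for some unit `n` then `c = 0`. -/
theorem stmt_9 (M : Matrix (Fin 3) (Fin 3) ℝ) (c : Fin 3 → ℝ)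
    (hpos : ∀ n : Fin 3 → ℝ, enorm3 n = 1 → enorm3 (M.mulVec n + c) ≤ 1) :
    (∀ n : Fin 3 → ℝ, enorm3 n = 1 → enorm3 (M.mulVec n) ^ 2 + enorm3 c ^ 2 ≤ 1)
      ∧ (∀ n : Fin 3 → ℝ, enorm3 n = 1 → enorm3 (M.mulVec n) ≤ 1)
      ∧ ((∃ n : Fin 3 → ℝ, enorm3 n = 1 ∧ enorm3 (M.mulVec n) = 1) → c = 0) := by
  have key : ∀ n : Fin 3 → ℝ, enorm3 n = 1 →
      enorm3 (M.mulVec n) ^ 2 + enorm3 c ^ 2 ≤ 1 := by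
    intro n hn
    have h1 := hpos n hn
    have hn' : enorm3 (-n) = 1 := by rw [enorm3_neg]; exact hn
    have h2 := hpos (-n) hn'
    rw [Matrix.mulVec_neg] at h2
    have s1 := sum_sq_le_of_enorm3_le_one _ h1
    have s2 := sum_sq_le_of_enorm3_le_one _ h2
    rw [sq_enorm3, sq_enorm3]
    set a := M.mulVec n with ha
    simp only [Pi.add_apply, Pi.neg_apply, Fin.sum_univ_three] at s1 s2 ⊢
    nlinarith [s1, s2]
  refine ⟨key, ?_, ?_⟩
  · intro n hn
    have := key n hn
    nlinarith [enorm3_nonneg (M.mulVec n), enorm3_nonneg c, sq_nonneg (enorm3 c)]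
  · rintro ⟨n, hn, hMn⟩
    have := key n hn
    rw [hMn] at this
    have hc : enorm3 c ^ 2 ≤ 0 := by nlinarith
    have hc0 : ∑ i, c i ^ 2 ≤ 0 := by rw [← sq_enorm3]; exact hc
    funext i
    have hi : c i ^ 2 ≤ 0 := by
      have : ∑ j, c j ^ 2 = 0 :=
        le_antisymm hc0 (Finset.sum_nonneg fun j _ => sq_nonneg _)
      have := (Finset.sum_eq_zero_iff_of_nonneg (fun j _ => sq_nonneg (c j))).mp this i (Finset.mem_univ i)
      linarith [this.le]
    have : c i = 0 := by nlinarith [sq_nonneg (c i)]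
    simpa using this
end

section
/- Let A ∈ M_m(ℂ) be a complex square matrix. The sequence of powers (Aⁿ)_{n∈ℕ} has at least one cluster point (in M_m(ℂ) with its standard topology) if and only if every eigenvalue z of A satisfies |z| ≤ 1, and for every eigenvalue z with |z| = 1 the eigenspace of z coincides with the generalized eigenspace of z (i.e. all Jordan blocks of z are trivial). -/
/-!
Write `f` for `x ↦ A x`. Since `M ↦ M x` is continuous, a cluster point of `Aⁿ` prevents every
orbit `‖fⁿ u‖` from tending to infinity. An eigenvector for `|z| > 1` has `‖fⁿ v‖ = |z|ⁿ ‖v‖`, and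
a Jordan chain `(f - z) u = v ≠ 0`, `(f - z) v = 0` with `|z| = 1` has `fⁿ u = zⁿ u + n zⁿ⁻¹ v`,
of norm at least `n ‖v‖ - ‖u‖`; both escape to infinity.

Conversely, `ℂᵐ` is spanned by the generalized eigenspaces. On one with `|z| < 1`, killed by
`(f - z)ᵏ`, the binomial expansion `fⁿ = ∑_{i<k} C(n,i) zⁿ⁻ⁱ (f - z)ⁱ` tends to `0`; on one with
`|z| = 1` the hypothesis makes `f` act by the unimodular scalar `z`. So every orbit is bounded,
hence so are the columns and entries of `Aⁿ`, which therefore stay in a compact set.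
-/

open Filter Topology Finset

lemma tendsto_choose_mul_pow_sub_nhds_zero {R : Type*} [NormedRing R]
    [HasSummableGeomSeries R] (i : ℕ) {r : R} (hr : ‖r‖ < 1) :
    Tendsto (fun n => (n.choose i : R) * r ^ (n - i)) atTop (𝓝 0) := by
  refine ((summable_choose_mul_geometric_of_norm_lt_one i hr).tendsto_atTop_zero.comp
    (tendsto_sub_atTop_nat i)).congr' ?_
  filter_upwards [eventually_ge_atTop i] with n hn
  simp [Nat.sub_add_cancel hn]

lemma MapClusterPt.not_tendsto_norm_atTop {ι E : Type*} [SeminormedAddCommGroup E] {l : Filter ι}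
    {u : ι → E} {x : E} (h : MapClusterPt x l u) : ¬Tendsto (fun i => ‖u i‖) l atTop := by
  rw [tendsto_norm_atTop_iff_cobounded]
  exact fun hu =>
    clusterPt_iff_not_disjoint.1 h ((Metric.disjoint_nhds_cobounded x).mono_right hu)

namespace Module.End

section Algebraic

variable {R M : Type*} [CommRing R] [AddCommGroup M] [Module R M]

lemma pow_eq_sum_choose_smul_sub_smul_pow (f : End R M) (z : R) (n : ℕ) :
    f ^ n = ∑ i ∈ range (n + 1), (n.choose i * z ^ (n - i)) • (f - z • 1) ^ i := by
  have h := ((Commute.one_right (f - z • 1)).smul_right z).add_pow n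
  rw [sub_add_cancel] at h
  rw [h]
  refine sum_congr rfl fun i _ => ?_
  rw [smul_pow, one_pow, mul_smul_one, smul_mul_assoc, ← nsmul_eq_mul',
    ← Nat.cast_smul_eq_nsmul R, smul_smul, mul_comm]

lemma pow_apply_eq_of_sub_smul_sq_apply_eq_zero {f : End R M} {z : R} {u : M}
    (hu : (f - z • 1) ((f - z • 1) u) = 0) (n : ℕ) :
    (f ^ n) u = z ^ n • u + (n * z ^ (n - 1)) • (f - z • 1) u := by
  set v := (f - z • 1) u
  have hfu : f u = z • u + v := by simp [v]
  have hfv : f v = z • v := by simpa [sub_eq_zero] using hu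
  induction n with
  | zero => simp
  | succ n ih =>
    rw [pow_succ', mul_apply, ih, map_add, map_smul, map_smul, hfu, hfv]
    rcases n with _ | n
    · simp
    · simp only [smul_add, smul_smul, Nat.cast_succ, add_tsub_cancel_right]
      module

end Algebraic

lemma eigenspace_eq_maxGenEigenspace_of_genEigenspace_two_le {K V : Type*} [Field K]
    [AddCommGroup V] [Module K V] {f : End K V} {z : K}
    (h : f.genEigenspace z 2 ≤ f.eigenspace z) : f.eigenspace z = f.maxGenEigenspace z := by
  refine le_antisymm eigenspace_le_maxGenEigenspace fun x hx => ?_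
  obtain ⟨k, hk⟩ := (mem_maxGenEigenspace _ _ _).1 hx
  have hker : LinearMap.ker ((f - z • 1) ^ 1) = LinearMap.ker ((f - z • 1) ^ 2) := by
    refine le_antisymm (LinearMap.ker_le_ker_comp _ _) ?_
    have h2 : f.genEigenspace z 2 = LinearMap.ker ((f - z • 1) ^ 2) := genEigenspace_nat
    rwa [h2, eigenspace_def, ← pow_one (f - z • 1)] at h
  rw [eigenspace_def, ← pow_one (f - z • 1), ker_pow_constant hker k]
  exact pow_map_zero_of_le (by omega) hk

section Normed

variable {𝕜 E : Type*} [NormedField 𝕜] [NormedAddCommGroup E] [NormedSpace 𝕜 E]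
  {f : End 𝕜 E} {z : 𝕜}

def boundedOrbits (f : End 𝕜 E) : Submodule 𝕜 E where
  carrier := {x | BddAbove (Set.range fun n => ‖(f ^ n) x‖)}
  zero_mem' := by simp
  add_mem' := by
    rintro x y ⟨Cx, hx⟩ ⟨Cy, hy⟩
    refine ⟨Cx + Cy, Set.forall_mem_range.2 fun n => ?_⟩
    rw [map_add]
    exact (norm_add_le _ _).trans (add_le_add (hx ⟨n, rfl⟩) (hy ⟨n, rfl⟩))
  smul_mem' := by
    rintro c x ⟨C, hx⟩
    refine ⟨‖c‖ * C, Set.forall_mem_range.2 fun n => ?_⟩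
    rw [map_smul, norm_smul]
    exact mul_le_mul_of_nonneg_left (hx ⟨n, rfl⟩) (norm_nonneg c)

lemma mem_boundedOrbits {x : E} :
    x ∈ f.boundedOrbits ↔ BddAbove (Set.range fun n => ‖(f ^ n) x‖) := Iff.rfl

lemma eigenspace_le_boundedOrbits (hz : ‖z‖ ≤ 1) : f.eigenspace z ≤ f.boundedOrbits := by
  intro x hx
  refine ⟨‖x‖, Set.forall_mem_range.2 fun n => ?_⟩
  rcases eq_or_ne x 0 with rfl | hx₀
  · simp
  rw [HasEigenvector.pow_apply ⟨hx, hx₀⟩, norm_smul, norm_pow]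
  exact mul_le_of_le_one_left (norm_nonneg x) (pow_le_one₀ (norm_nonneg z) hz)

lemma tendsto_norm_pow_apply_atTop_of_hasEigenvector {v : E} (hv : f.HasEigenvector z v)
    (hz : 1 < ‖z‖) : Tendsto (fun n => ‖(f ^ n) v‖) atTop atTop := by
  simp only [hv.pow_apply, norm_smul, norm_pow]
  exact (tendsto_pow_atTop_atTop_of_one_lt hz).atTop_mul_const (norm_pos_iff.2 hv.2)

lemma norm_le_one_of_hasEigenvalue
    (h : ∀ u : E, ¬Tendsto (fun n => ‖(f ^ n) u‖) atTop atTop) (hz : f.HasEigenvalue z) :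
    ‖z‖ ≤ 1 := by
  by_contra! hz₁
  obtain ⟨v, hv⟩ := hz.exists_hasEigenvector
  exact h v (tendsto_norm_pow_apply_atTop_of_hasEigenvector hv hz₁)

lemma tendsto_pow_apply_nhds_zero_of_mem_maxGenEigenspace (hz : ‖z‖ < 1) {x : E}
    (hx : x ∈ f.maxGenEigenspace z) : Tendsto (fun n => (f ^ n) x) atTop (𝓝 0) := by
  obtain ⟨k, hk⟩ := (mem_maxGenEigenspace _ _ _).1 hx
  have hsum : ∀ n ≥ k, (f ^ n) x =
      ∑ i ∈ range k, (n.choose i * z ^ (n - i)) • ((f - z • 1) ^ i) x := fun n hn => by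
    simp only [pow_eq_sum_choose_smul_sub_smul_pow f z, LinearMap.sum_apply, LinearMap.smul_apply]
    refine (sum_subset (range_subset_range.2 (by omega)) fun i _ hi => ?_).symm
    rw [pow_map_zero_of_le (by simpa using hi) hk, smul_zero]
  have hlim : Tendsto (fun n => ∑ i ∈ range k, (n.choose i * z ^ (n - i)) • ((f - z • 1) ^ i) x)
      atTop (𝓝 0) := by
    simpa using tendsto_finsetSum _ fun i _ =>
      (tendsto_choose_mul_pow_sub_nhds_zero i hz).smul_const (((f - z • 1) ^ i) x)
  exact hlim.congr' ((eventually_ge_atTop k).mono fun n hn => (hsum n hn).symm)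

lemma maxGenEigenspace_le_boundedOrbits (hz : ‖z‖ < 1) :
    f.maxGenEigenspace z ≤ f.boundedOrbits := fun _ hx =>
  (tendsto_pow_apply_nhds_zero_of_mem_maxGenEigenspace hz hx).norm.bddAbove_range

lemma boundedOrbits_eq_top [IsAlgClosed 𝕜] [FiniteDimensional 𝕜 E]
    (h₁ : ∀ z, f.HasEigenvalue z → ‖z‖ ≤ 1)
    (h₂ : ∀ z : 𝕜, ‖z‖ = 1 → f.eigenspace z = f.maxGenEigenspace z) :
    f.boundedOrbits = ⊤ := by
  rw [eq_top_iff, ← iSup_maxGenEigenspace_eq_top f]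
  refine iSup_le fun z => ?_
  rcases lt_trichotomy ‖z‖ 1 with hz | hz | hz
  · exact maxGenEigenspace_le_boundedOrbits hz
  · rw [← h₂ z hz]
    exact eigenspace_le_boundedOrbits hz.le
  · have : f.maxGenEigenspace z = ⊥ := by
      by_contra hne
      exact (h₁ z (HasUnifEigenvalue.lt zero_lt_one hne)).not_gt hz
    simp [this]

end Normed

section RCLike

variable {𝕜 E : Type*} [RCLike 𝕜] [NormedAddCommGroup E] [NormedSpace 𝕜 E]
  {f : End 𝕜 E} {z : 𝕜}

lemma tendsto_norm_pow_apply_atTop_of_norm_eq_one (hz : ‖z‖ = 1) {u : E}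
    (hu : (f - z • 1) u ≠ 0) (hu₂ : (f - z • 1) ((f - z • 1) u) = 0) :
    Tendsto (fun n => ‖(f ^ n) u‖) atTop atTop := by
  have hlow (n : ℕ) : n * ‖(f - z • 1) u‖ - ‖u‖ ≤ ‖(f ^ n) u‖ := by
    have h := norm_le_add_norm_add ((n * z ^ (n - 1)) • (f - z • 1) u) (z ^ n • u)
    simp only [norm_smul, norm_mul, norm_pow, hz, one_pow, mul_one, one_mul,
      RCLike.norm_natCast] at h
    rw [pow_apply_eq_of_sub_smul_sq_apply_eq_zero hu₂, add_comm]
    linarith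
  refine tendsto_atTop_mono hlow ?_
  exact tendsto_atTop_add_const_right _ _
    (tendsto_natCast_atTop_atTop.atTop_mul_const (norm_pos_iff.2 hu))

lemma eigenspace_eq_maxGenEigenspace_of_norm_eq_one
    (h : ∀ u : E, ¬Tendsto (fun n => ‖(f ^ n) u‖) atTop atTop) (hz : ‖z‖ = 1) :
    f.eigenspace z = f.maxGenEigenspace z := by
  refine eigenspace_eq_maxGenEigenspace_of_genEigenspace_two_le fun u hu => ?_
  have hu₂ : (f - z • 1) ((f - z • 1) u) = 0 := by
    rw [← mul_apply, ← sq]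
    exact mem_genEigenspace_nat.1 hu
  rw [eigenspace_def, LinearMap.mem_ker]
  by_contra hu₁
  exact h u (tendsto_norm_pow_apply_atTop_of_norm_eq_one hz hu₁ hu₂)

end RCLike

end Module.End

namespace Matrix

variable {ι κ 𝕜 : Type*}

lemma exists_mapClusterPt_of_norm_le [SeminormedAddCommGroup 𝕜] [ProperSpace 𝕜] {α : Type*}
    {l : Filter α} [l.NeBot] (M : α → Matrix ι κ 𝕜) (C : ℝ) (hC : ∀ a i j, ‖M a i j‖ ≤ C) :
    ∃ S, MapClusterPt S l M := by
  have hK : IsCompact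
      (Set.univ.pi fun _ : ι => Set.univ.pi fun _ : κ => Metric.closedBall (0 : 𝕜) C) :=
    isCompact_univ_pi fun _ => isCompact_univ_pi fun _ => isCompact_closedBall 0 C
  obtain ⟨S, -, hS⟩ := hK.exists_mapClusterPt (f := l) (u := M) <| le_principal_iff.2 <|
    mem_map.2 <| Eventually.of_forall fun a i _ j _ => mem_closedBall_zero_iff.2 (hC a i j)
  exact ⟨S, hS⟩

lemma norm_apply_le_norm_mulVec_single [Fintype ι] [Fintype κ] [DecidableEq κ]
    [SeminormedRing 𝕜] (M : Matrix ι κ 𝕜) (i : ι) (j : κ) :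
    ‖M i j‖ ≤ ‖M *ᵥ Pi.single j 1‖ := by
  rw [mulVec_single_one]
  exact norm_le_pi_norm (M.col j) i

lemma exists_mapClusterPt_of_bddAbove_norm_mulVec [Fintype ι] [Fintype κ] [DecidableEq κ]
    [SeminormedRing 𝕜] [ProperSpace 𝕜] {α : Type*} {l : Filter α} [l.NeBot]
    (M : α → Matrix ι κ 𝕜) (h : ∀ x, BddAbove (Set.range fun a => ‖M a *ᵥ x‖)) :
    ∃ S, MapClusterPt S l M := by
  choose c hc using fun j : κ => h (Pi.single j 1)
  obtain ⟨C, hC⟩ := Finite.bddAbove_range c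
  refine exists_mapClusterPt_of_norm_le M C fun a i j => ?_
  calc ‖M a i j‖ ≤ ‖M a *ᵥ Pi.single j 1‖ := norm_apply_le_norm_mulVec_single _ i j
    _ ≤ c j := hc j ⟨a, rfl⟩
    _ ≤ C := hC ⟨j, rfl⟩

lemma mulVecLin_pow {R : Type*} [CommSemiring R] [Fintype ι] [DecidableEq ι] (A : Matrix ι ι R)
    (n : ℕ) : mulVecLin (A ^ n) = mulVecLin A ^ n := by
  simpa only [toLin'_apply'] using toLin'_pow A n

end Matrix

open Matrix

/-- The sequence of powers of a complex matrix has a cluster point iff all eigenvalues lie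
in the closed unit disc and every peripheral eigenvalue has trivial Jordan blocks. -/
theorem stmt_11 (m : ℕ) (A : Matrix (Fin m) (Fin m) ℂ) :
    (∃ S : Matrix (Fin m) (Fin m) ℂ, MapClusterPt S Filter.atTop fun n => A ^ n) ↔
      ((∀ z : ℂ, Module.End.HasEigenvalue (Matrix.mulVecLin A) z → ‖z‖ ≤ 1)
        ∧ ∀ z : ℂ, ‖z‖ = 1 →
            Module.End.eigenspace (Matrix.mulVecLin A) z
              = Module.End.maxGenEigenspace (Matrix.mulVecLin A) z) := by
  have horbit (n : ℕ) (x : Fin m → ℂ) : (A ^ n) *ᵥ x = (mulVecLin A ^ n) x := by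
    rw [← mulVecLin_pow, mulVecLin_apply]
  constructor
  · rintro ⟨S, hS⟩
    have hesc (u : Fin m → ℂ) : ¬Tendsto (fun n => ‖(mulVecLin A ^ n) u‖) atTop atTop := by
      simpa only [← horbit, Function.comp_def, id] using (hS.tendsto_comp
        ((continuous_id.matrix_mulVec continuous_const).tendsto S)).not_tendsto_norm_atTop
    exact ⟨fun z => Module.End.norm_le_one_of_hasEigenvalue hesc,
      fun z => Module.End.eigenspace_eq_maxGenEigenspace_of_norm_eq_one hesc⟩
  · rintro ⟨h₁, h₂⟩
    refine exists_mapClusterPt_of_bddAbove_norm_mulVec _ fun x => ?_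
    have hx : x ∈ Module.End.boundedOrbits (mulVecLin A) := by
      rw [Module.End.boundedOrbits_eq_top h₁ h₂]
      exact Submodule.mem_top
    simpa only [horbit] using Module.End.mem_boundedOrbits.1 hx
end

section
/- Let ψ be a positive, trace-preserving ℂ-linear map on M_d(ℂ). Then there exists a positive semidefinite matrix ρ₀ ∈ M_d(ℂ) with ψ(ρ₀) = ρ₀ whose support contains the support of every Hermitian fixed point of ψ: for every Hermitian X ∈ M_d(ℂ) with ψ(X) = X and every v ∈ ℂ^d, if ρ₀·v = 0 then X·v = 0. -/
open Matrix Kronecker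
open scoped ComplexOrder

/-!
The Cesàro means `Sₙ = (1/n) ∑_{k<n} ψᵏ(1)` are positive semidefinite of trace `d`, hence
bounded in operator norm; let `ρ₀` be a limit point. Since `ψ Sₙ - Sₙ = (ψⁿ(1) - 1)/n → 0`, `ρ₀` is a fixed point.
A Hermitian fixed point `X` satisfies `-‖X‖ ≤ X ≤ ‖X‖`, and averaging this along the orbit
gives `-‖X‖ Sₙ ≤ X ≤ ‖X‖ Sₙ`, so in the limit `-‖X‖ ρ₀ ≤ X ≤ ‖X‖ ρ₀`: the kernel of `ρ₀` is
contained in that of `X`.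
-/

open Finset Filter Topology
open scoped Matrix.Norms.L2Operator MatrixOrder

section CesaroMean

variable {R E : Type*} [Field R] [AddCommGroup E] [Module R E]

def cesaroMean (ψ : Module.End R E) (n : ℕ) : Module.End R E :=
  (n : R)⁻¹ • ∑ k ∈ range n, ψ ^ k

variable {ψ : Module.End R E}

lemma cesaroMean_apply_eq_self [CharZero R] {x : E} (hx : ψ x = x) {n : ℕ} (hn : n ≠ 0) :
    cesaroMean ψ n x = x := by
  have hk : ∀ k, (ψ ^ k) x = x := fun k => Module.End.pow_apply ψ k x ▸ Function.iterate_fixed hx k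
  simp [cesaroMean, LinearMap.sum_apply, hk, ← Nat.cast_smul_eq_nsmul R, smul_smul, hn]

lemma apply_cesaroMean_sub_cesaroMean (n : ℕ) (x : E) :
    ψ (cesaroMean ψ n x) - cesaroMean ψ n x = (n : R)⁻¹ • ((ψ ^ n) x - x) := by
  have := congr($(mul_geom_sum ψ n) x)
  simpa [cesaroMean, sub_mul, ← smul_sub] using congr((n : R)⁻¹ • $this)

end CesaroMean

section Normed

variable {𝕜 E : Type*} [RCLike 𝕜] [NormedAddCommGroup E] [NormedSpace 𝕜 E]
  {ψ : Module.End 𝕜 E} {x : E} {C : ℝ}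

lemma norm_cesaroMean_apply_le (hC : ∀ k, ‖(ψ ^ k) x‖ ≤ C) (n : ℕ) :
    ‖cesaroMean ψ n x‖ ≤ C := by
  rcases eq_or_ne n 0 with rfl | hn
  · simpa [cesaroMean] using (norm_nonneg _).trans (hC 0)
  calc ‖cesaroMean ψ n x‖ ≤ (n : ℝ)⁻¹ * ∑ k ∈ range n, ‖(ψ ^ k) x‖ := by
        rw [cesaroMean, LinearMap.smul_apply, norm_smul, norm_inv, RCLike.norm_natCast,
          LinearMap.sum_apply]
        gcongr
        exact norm_sum_le _ _
    _ ≤ (n : ℝ)⁻¹ * (n * C) := by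
        gcongr
        simpa using sum_le_sum (s := range n) fun k _ => hC k
    _ = C := by field_simp

lemma tendsto_apply_cesaroMean_sub_cesaroMean (hC : ∀ k, ‖(ψ ^ k) x‖ ≤ C) :
    Tendsto (fun n => ψ (cesaroMean ψ n x) - cesaroMean ψ n x) atTop (𝓝 0) := by
  simp_rw [apply_cesaroMean_sub_cesaroMean]
  refine squeeze_zero_norm (a := fun n : ℕ => (C + ‖x‖) / n) (fun n => ?_) ?_
  · rw [norm_smul, norm_inv, RCLike.norm_natCast, inv_mul_eq_div]
    gcongr
    exact (norm_sub_le _ _).trans (by gcongr; exact hC n)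
  · exact tendsto_const_nhds.div_atTop tendsto_natCast_atTop_atTop

end Normed

lemma isFixedPt_of_tendsto_of_tendsto_sub {E : Type*} [TopologicalSpace E] [AddCommGroup E]
    [IsTopologicalAddGroup E] [T2Space E] {T : E → E} (hT : Continuous T) {u : ℕ → E} {z : E}
    (hu : Tendsto u atTop (𝓝 z)) (hTu : Tendsto (fun n => T (u n) - u n) atTop (𝓝 0)) :
    Function.IsFixedPt T z := by
  refine tendsto_nhds_unique ((hT.tendsto z).comp hu) ?_
  simpa [Function.comp_def] using hu.add hTu

namespace Matrix

variable {n 𝕜 : Type*} [RCLike 𝕜] {ψ : Module.End 𝕜 (Matrix n n 𝕜)}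

lemma PosSemidef.pow_apply (hψ : ∀ X, X.PosSemidef → (ψ X).PosSemidef) {X : Matrix n n 𝕜}
    (hX : X.PosSemidef) (k : ℕ) : ((ψ ^ k) X).PosSemidef := by
  induction k with
  | zero => simpa using hX
  | succ k ih => rw [pow_succ', Module.End.mul_apply]; exact hψ _ ih

lemma PosSemidef.cesaroMean_apply (hψ : ∀ X, X.PosSemidef → (ψ X).PosSemidef)
    {X : Matrix n n 𝕜} (hX : X.PosSemidef) (m : ℕ) : (cesaroMean ψ m X).PosSemidef := by
  rw [cesaroMean, LinearMap.smul_apply, LinearMap.sum_apply]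
  exact (posSemidef_sum _ fun k _ => hX.pow_apply hψ k).smul (by positivity)

lemma le_cesaroMean_apply_of_le (hψ : ∀ X, X.PosSemidef → (ψ X).PosSemidef) {X Y : Matrix n n 𝕜}
    (hX : ψ X = X) (hXY : X ≤ Y) {m : ℕ} (hm : m ≠ 0) : X ≤ cesaroMean ψ m Y := by
  have h := (le_iff.mp hXY).cesaroMean_apply hψ m
  rwa [map_sub, cesaroMean_apply_eq_self hX hm, ← le_iff] at h

variable [Fintype n]

lemma trace_pow_apply (hψ : ∀ X, (ψ X).trace = X.trace) (X : Matrix n n 𝕜) (k : ℕ) :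
    ((ψ ^ k) X).trace = X.trace := by
  induction k with
  | zero => simp
  | succ k ih => rw [pow_succ', Module.End.mul_apply, hψ, ih]

lemma mulVec_eq_zero_of_neg_le_of_le {A X : Matrix n n 𝕜} (hAX : -A ≤ X) (hXA : X ≤ A)
    {v : n → 𝕜} (hv : A *ᵥ v = 0) : X *ᵥ v = 0 := by
  rw [le_iff] at hAX hXA
  have hform : star v ⬝ᵥ X *ᵥ v = 0 := by
    have h₁ := hXA.dotProduct_mulVec_nonneg v
    have h₂ := hAX.dotProduct_mulVec_nonneg v
    simp only [sub_mulVec, sub_neg_eq_add, add_mulVec, hv, zero_sub, add_zero, dotProduct_neg,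
      neg_nonneg] at h₁ h₂
    exact le_antisymm h₁ h₂
  have := (hXA.dotProduct_mulVec_zero_iff v).mp (by simp [sub_mulVec, hv, hform])
  simpa [sub_mulVec, hv] using this

lemma PosSemidef.norm_le_re_trace [DecidableEq n] {A : Matrix n n ℂ} (hA : A.PosSemidef) :
    ‖A‖ ≤ A.trace.re := by
  rw [CStarAlgebra.norm_le_iff_le_algebraMap A (Complex.nonneg_iff.mp hA.trace_nonneg).1 hA.nonneg]
  refine le_algebraMap_of_spectrum_le fun r hr => ?_
  rw [hA.1.spectrum_real_eq_range_eigenvalues] at hr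
  obtain ⟨i, rfl⟩ := hr
  have htr : A.trace.re = ∑ j, hA.1.eigenvalues j := by
    simp [hA.1.trace_eq_sum_eigenvalues, Complex.re_sum]
  rw [htr]
  exact single_le_sum (fun j _ => hA.eigenvalues_nonneg j) (mem_univ i)

end Matrix

/-- A positive trace-preserving map has a positive semidefinite fixed point whose support
contains the support of every Hermitian fixed point. -/
theorem stmt_18 (d : ℕ) (ψ : Matrix (Fin d) (Fin d) ℂ →ₗ[ℂ] Matrix (Fin d) (Fin d) ℂ)
    (hpos : ∀ X : Matrix (Fin d) (Fin d) ℂ, X.PosSemidef → (ψ X).PosSemidef)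
    (htp : ∀ X, (ψ X).trace = X.trace) :
    ∃ ρ₀ : Matrix (Fin d) (Fin d) ℂ, ρ₀.PosSemidef ∧ ψ ρ₀ = ρ₀ ∧
      ∀ X : Matrix (Fin d) (Fin d) ℂ, X.IsHermitian → ψ X = X →
        ∀ v : Fin d → ℂ, ρ₀.mulVec v = 0 → X.mulVec v = 0 := by
  have horbit : ∀ k, ‖(ψ ^ k) 1‖ ≤ d := fun k =>
    (PosSemidef.one.pow_apply hpos k).norm_le_re_trace.trans (by simp [trace_pow_apply htp])
  obtain ⟨ρ₀, -, φ, hφ, hlim⟩ := tendsto_subseq_of_bounded (Metric.isBounded_closedBall (x := 0))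
    fun m => mem_closedBall_zero_iff.mpr (norm_cesaroMean_apply_le horbit m)
  have hφ_ne : ∀ᶠ m in atTop, φ m ≠ 0 := hφ.tendsto_atTop.eventually_ne_atTop 0
  have hρ₀ : ρ₀.PosSemidef := (CStarAlgebra.isClosed_nonneg.mem_of_tendsto hlim
    (Eventually.of_forall fun m => (PosSemidef.one.cesaroMean_apply hpos (φ m)).nonneg)).posSemidef
  have hfix : ψ ρ₀ = ρ₀ := isFixedPt_of_tendsto_of_tendsto_sub ψ.continuous_of_finiteDimensional
    hlim ((tendsto_apply_cesaroMean_sub_cesaroMean horbit).comp hφ.tendsto_atTop)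
  have hdom : ∀ X, X.IsHermitian → ψ X = X → X ≤ ‖X‖ • ρ₀ := fun X hX hXfix =>
    le_of_tendsto_of_tendsto tendsto_const_nhds (hlim.const_smul ‖X‖) <| hφ_ne.mono fun m hm => by
      have := le_cesaroMean_apply_of_le hpos hXfix (IsSelfAdjoint.le_algebraMap_norm_self hX) hm
      rwa [Algebra.algebraMap_eq_smul_one, LinearMap.map_smul_of_tower] at this
  refine ⟨ρ₀, hρ₀, hfix, fun X hX hXfix v hv => ?_⟩
  refine mulVec_eq_zero_of_neg_le_of_le ?_ (hdom X hX hXfix) (by rw [smul_mulVec, hv, smul_zero])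
  simpa [neg_le] using hdom (-X) hX.neg (by rw [map_neg, hXfix])
end

section
/- Let ψ be a positive, trace-preserving ℂ-linear map on M_d(ℂ), and let X ∈ M_d(ℂ) be a Hermitian fixed point of ψ: X† = X and ψ(X) = X. Write X = A − B where A, B ∈ M_d(ℂ) are positive semidefinite with A·B = 0 (the decomposition of X into its positive and negative spectral parts). Then ψ(A) = A and ψ(B) = B; in particular ψ(A + B) = A + B, i.e. |X| is also a fixed point of ψ. -/
/-!
Let `P` be the support projection of `A`, so `P A = A` and `P B = 0`. If `A' - B' = A - B` with
`A', B' ⪰ 0`, then `P A' P = A + P B' P`, and splitting `Tr A'` along `P` and `1 - P` gives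
`Tr A' = Tr A + Tr (P B' P) + Tr ((1 - P) A' (1 - P))`. Hence `Tr A' ≤ Tr A` forces both positive
compressions to vanish, so `A' = P A' P = A`. For `A' = ψ A`, `B' = ψ B` all of this holds, since
`ψ` is positive, `ψ A - ψ B = ψ X = X`, and `ψ` preserves the trace.
-/

open Matrix Kronecker
open scoped ComplexOrder

variable {m n 𝕜 : Type*} [Fintype n] [RCLike 𝕜]

namespace Matrix

theorem PosSemidef.mul_eq_zero_of_conjTranspose_mul_mul_eq_zero_s19 {M : Matrix n n 𝕜}
    (hM : M.PosSemidef) {Q : Matrix n m 𝕜} (h : Qᴴ * M * Q = 0) : M * Q = 0 := by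
  classical
  open scoped MatrixOrder in
  obtain ⟨N, rfl⟩ := CStarAlgebra.nonneg_iff_eq_star_mul_self.mp hM.nonneg
  have hNQ : N * Q = 0 := by
    rw [← conjTranspose_mul_self_eq_zero, conjTranspose_mul, ← h]
    simp only [star_eq_conjTranspose, Matrix.mul_assoc]
  rw [Matrix.mul_assoc, hNQ, Matrix.mul_zero]

theorem trace_mul_mul_add_trace_one_sub_mul_mul [DecidableEq n] {P : Matrix n n 𝕜}
    (hP : IsIdempotentElem P) (M : Matrix n n 𝕜) :
    (P * M * P).trace + ((1 - P) * M * (1 - P)).trace = M.trace := by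
  rw [trace_mul_cycle, hP.eq, trace_mul_cycle, hP.one_sub.eq, ← trace_add, ← add_mul,
    add_sub_cancel, one_mul]

theorem IsHermitian.exists_isStarProjection [DecidableEq n] {A B : Matrix n n 𝕜}
    (hA : A.IsHermitian) (hAB : A * B = 0) :
    ∃ P : Matrix n n 𝕜, IsStarProjection P ∧ P * A = A ∧ P * B = 0 := by
  have hcont (f : ℝ → ℝ) : ContinuousOn f (spectrum ℝ A) :=
    finite_real_spectrum.continuousOn f
  -- `x⁻¹ * x` is the indicator of `x ≠ 0` (as `0⁻¹ = 0`); its factor `x` gives `P * B = 0`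
  refine ⟨cfc (fun x : ℝ ↦ x⁻¹ * x) A, ⟨?_, cfc_predicate _ A⟩, ?_, ?_⟩
  · rw [IsIdempotentElem, ← cfc_mul _ _ A (hcont _) (hcont _)]
    exact cfc_congr fun x _ ↦ by by_cases hx : x = 0 <;> simp [hx]
  · calc _ = cfc (fun x : ℝ ↦ x⁻¹ * x * x) A := by
          rw [cfc_mul (fun x : ℝ ↦ x⁻¹ * x) (fun x ↦ x) A (hcont _) (hcont _),
            cfc_id' ℝ A]
      _ = A := by simp only [inv_mul_mul_self, cfc_id' ℝ A]
  · rw [cfc_mul _ _ A (hcont _) (hcont _), cfc_id' ℝ A, Matrix.mul_assoc, hAB, Matrix.mul_zero]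

theorem PosSemidef.mul_mul_eq_self_of_one_sub_mul_mul_eq_zero [DecidableEq n]
    {M P : Matrix n n 𝕜} (hM : M.PosSemidef) (hP : IsStarProjection P)
    (h : (1 - P) * M * (1 - P) = 0) : P * M * P = M := by
  have hPH : Pᴴ = P := hP.isSelfAdjoint
  have hQH : (1 - P)ᴴ = 1 - P := hP.one_sub.isSelfAdjoint
  have hMQ : M * (1 - P) = 0 := hM.mul_eq_zero_of_conjTranspose_mul_mul_eq_zero_s19 (by rwa [hQH])
  have hMP : M * P = M := by rwa [Matrix.mul_sub, Matrix.mul_one, sub_eq_zero, eq_comm] at hMQ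
  have hPM : P * M = M := by
    simpa only [conjTranspose_mul, hPH, hM.isHermitian.eq] using congrArg Matrix.conjTranspose hMP
  rw [hPM, hMP]

theorem IsHermitian.eq_of_sub_eq_sub_of_trace_le [DecidableEq n] {A B A' B' : Matrix n n 𝕜}
    (hA : A.IsHermitian) (hAB : A * B = 0) (hA' : A'.PosSemidef) (hB' : B'.PosSemidef)
    (hsub : A' - B' = A - B) (htr : A'.trace ≤ A.trace) : A' = A := by
  obtain ⟨P, hP, hPA, hPB⟩ := hA.exists_isStarProjection hAB
  have hPH : Pᴴ = P := hP.isSelfAdjoint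
  have hAP : A * P = A := by
    simpa only [conjTranspose_mul, hPH, hA.eq] using congrArg Matrix.conjTranspose hPA
  have hcompress : P * A' * P = A + P * B' * P := by
    rw [← sub_add_cancel A' B', hsub, Matrix.mul_add, Matrix.add_mul, Matrix.mul_sub,
      Matrix.sub_mul, hPA, hAP, hPB, Matrix.zero_mul, sub_zero]
  have hB'P : (P * B' * P).PosSemidef := by
    have := hB'.conjTranspose_mul_mul_same P
    rwa [hPH] at this
  have hA'Q : ((1 - P) * A' * (1 - P)).PosSemidef := by
    have := hA'.conjTranspose_mul_mul_same (1 - P)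
    rwa [show (1 - P)ᴴ = 1 - P from hP.one_sub.isSelfAdjoint] at this
  have hsum : (P * B' * P).trace + ((1 - P) * A' * (1 - P)).trace = 0 := by
    have := trace_mul_mul_add_trace_one_sub_mul_mul hP.isIdempotentElem A'
    rw [hcompress, trace_add, add_assoc] at this
    exact le_antisymm ((add_le_iff_nonpos_right _).mp (this.trans_le htr))
      (add_nonneg hB'P.trace_nonneg hA'Q.trace_nonneg)
  obtain ⟨hB'P0, hA'Q0⟩ :=
    (add_eq_zero_iff_of_nonneg hB'P.trace_nonneg hA'Q.trace_nonneg).mp hsum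
  calc A' = P * A' * P :=
        (hA'.mul_mul_eq_self_of_one_sub_mul_mul_eq_zero hP (hA'Q.trace_eq_zero_iff.mp hA'Q0)).symm
    _ = A := by rw [hcompress, hB'P.trace_eq_zero_iff.mp hB'P0, add_zero]

end Matrix

theorem stmt_19_general (d : ℕ) (ψ : Matrix (Fin d) (Fin d) ℂ →ₗ[ℂ] Matrix (Fin d) (Fin d) ℂ)
    (hpos : ∀ X : Matrix (Fin d) (Fin d) ℂ, X.PosSemidef → (ψ X).PosSemidef)
    (htp : ∀ X, (ψ X).trace = X.trace)
    (X : Matrix (Fin d) (Fin d) ℂ) (hfix : ψ X = X)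
    (A B : Matrix (Fin d) (Fin d) ℂ) (hA : A.PosSemidef) (hB : B.PosSemidef)
    (hAB : A * B = 0) (hdec : X = A - B) :
    ψ A = A ∧ ψ B = B ∧ ψ (A + B) = A + B := by
  have hsub : ψ A - ψ B = A - B := by rw [← map_sub, ← hdec, hfix]
  have hψA : ψ A = A :=
    hA.isHermitian.eq_of_sub_eq_sub_of_trace_le hAB (hpos A hA) (hpos B hB) hsub (htp A).le
  have hψB : ψ B = B := by rwa [hψA, sub_right_inj] at hsub
  exact ⟨hψA, hψB, by rw [map_add, hψA, hψB]⟩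

/-- The positive and negative parts of a Hermitian fixed point of a positive
trace-preserving map are themselves fixed points; in particular so is . -/
theorem stmt_19 (d : ℕ) (ψ : Matrix (Fin d) (Fin d) ℂ →ₗ[ℂ] Matrix (Fin d) (Fin d) ℂ)
    (hpos : ∀ X : Matrix (Fin d) (Fin d) ℂ, X.PosSemidef → (ψ X).PosSemidef)
    (htp : ∀ X, (ψ X).trace = X.trace)
    (X : Matrix (Fin d) (Fin d) ℂ) (hX : X.IsHermitian) (hfix : ψ X = X)
    (A B : Matrix (Fin d) (Fin d) ℂ) (hA : A.PosSemidef) (hB : B.PosSemidef)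
    (hAB : A * B = 0) (hdec : X = A - B) :
    ψ A = A ∧ ψ B = B ∧ ψ (A + B) = A + B :=
  stmt_19_general d ψ hpos htp X hfix A B hA hB hAB hdec
end
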